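/- arXiv:0803.4030 — 14 statements merged into one kernel-verified Lean document; each statement's English description precedes it below -/
import Mathlib

section
/- Let X be a finite set with n ≥ 1 elements and let Σ be a nonempty finite set of enumerations of X (sequences in which each element of X occurs exactly once). Then the family 𝓛_Σ of all unions of prefixes of members of Σ is a learning space on X: it contains the empty set and X, it is closed under unions, and it is accessible (every nonempty member S of 𝓛_Σ contains an element x with S \ {x} ∈ 𝓛_Σ). -/
/-!
Only accessibility needs an idea. Write `S` as the union of chosen prefixes of the `σ ∈ Σ`.
Cutting every `σ` just before an element `x ∈ S` gives again a union of prefixes, and it is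
`S \ {x}` as soon as every other `y ∈ S` occurs in some chosen prefix before `x`. This holds
when `x` is an element of `S` whose earliest position in the chosen prefixes is as late as
possible: a chosen prefix reaching `y` at its earliest position but not before `x` would contain
`x` at a position no earlier than that of `y`.
-/

/-- A learning space on a finite set `X`: a family of subsets of `X` containing the
empty set, whose union is `X`, that is accessible and closed under unions. -/
def IsLearningSpace {α : Type*} [DecidableEq α] (X : Finset α) (L : Set (Finset α)) : Prop :=
  ∅ ∈ L ∧
  (∀ S ∈ L, S ⊆ X) ∧
  (∀ x ∈ X, ∃ S ∈ L, x ∈ S) ∧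
  (∀ S ∈ L, S.Nonempty → ∃ x ∈ S, S.erase x ∈ L) ∧
  (∀ S ∈ L, ∀ T ∈ L, S ∪ T ∈ L)

/-- The family of all unions of prefixes of members of `Σ` (one prefix length chosen for
each sequence; the empty union `∅` is included). -/
def LSigma {α : Type*} [DecidableEq α] (Sig : Finset (List α)) : Set (Finset α) :=
  { S | ∃ f : List α → ℕ, S = Sig.sup fun σ => (σ.take (f σ)).toFinset }

section lSigma

variable {α : Type*} [DecidableEq α] {Sig : Finset (List α)}

theorem mem_sup_take_toFinset {f : List α → ℕ} {y : α} :
    y ∈ Sig.sup (fun σ => (σ.take (f σ)).toFinset) ↔ ∃ σ ∈ Sig, y ∈ σ.take (f σ) := by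
  simp only [Finset.mem_sup, List.mem_toFinset]

theorem empty_mem_lSigma : ∅ ∈ LSigma Sig :=
  ⟨fun _ => 0, by simp only [List.take_zero, List.toFinset_nil]; exact (Finset.sup_bot _).symm⟩

theorem union_mem_lSigma {S T : Finset α} (hS : S ∈ LSigma Sig) (hT : T ∈ LSigma Sig) :
    S ∪ T ∈ LSigma Sig := by
  obtain ⟨f, rfl⟩ := hS
  obtain ⟨g, rfl⟩ := hT
  refine ⟨fun σ => max (f σ) (g σ), ?_⟩
  ext y
  simp only [Finset.mem_union, mem_sup_take_toFinset]
  constructor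
  · rintro (⟨σ, hσ, hy⟩ | ⟨σ, hσ, hy⟩)
    exacts [⟨σ, hσ, List.take_subset_take_left _ (le_max_left _ _) hy⟩,
      ⟨σ, hσ, List.take_subset_take_left _ (le_max_right _ _) hy⟩]
  · rintro ⟨σ, hσ, hy⟩
    rcases max_choice (f σ) (g σ) with h | h <;> rw [h] at hy
    exacts [Or.inl ⟨σ, hσ, hy⟩, Or.inr ⟨σ, hσ, hy⟩]

theorem subset_of_mem_lSigma {X S : Finset α} (hX : ∀ σ ∈ Sig, σ.toFinset ⊆ X)
    (hS : S ∈ LSigma Sig) : S ⊆ X := by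
  obtain ⟨f, rfl⟩ := hS
  intro y hy
  obtain ⟨σ, hσ, hyσ⟩ := mem_sup_take_toFinset.1 hy
  exact hX σ hσ (List.mem_toFinset.2 (σ.take_subset _ hyσ))

theorem mem_lSigma_of_toFinset_eq {X : Finset α} (hne : Sig.Nonempty)
    (hX : ∀ σ ∈ Sig, σ.toFinset = X) : X ∈ LSigma Sig := by
  refine ⟨List.length, ?_⟩
  simp only [List.take_length]
  rw [Finset.sup_congr rfl hX, Finset.sup_const hne]

-- `0` (= `sInf ∅`) for a `y` that lies in none of the prefixes `σ.take (f σ)`.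
noncomputable def firstPos (Sig : Finset (List α)) (f : List α → ℕ) (y : α) : ℕ :=
  sInf {k | ∃ σ ∈ Sig, y ∈ σ.take (f σ) ∧ σ.idxOf y = k}

theorem firstPos_le_idxOf {f : List α → ℕ} {σ : List α} {y : α} (hσ : σ ∈ Sig)
    (hy : y ∈ σ.take (f σ)) : firstPos Sig f y ≤ σ.idxOf y :=
  Nat.sInf_le ⟨σ, hσ, hy, rfl⟩

theorem exists_idxOf_eq_firstPos {f : List α → ℕ} {y : α} (hy : ∃ σ ∈ Sig, y ∈ σ.take (f σ)) :
    ∃ σ ∈ Sig, y ∈ σ.take (f σ) ∧ σ.idxOf y = firstPos Sig f y := by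
  obtain ⟨σ, hσ, hyσ⟩ := hy
  exact Nat.sInf_mem (s := {k | ∃ σ ∈ Sig, y ∈ σ.take (f σ) ∧ σ.idxOf y = k})
    ⟨σ.idxOf y, σ, hσ, hyσ, rfl⟩

theorem exists_idxOf_lt_of_firstPos_le {f : List α → ℕ} {x y : α} (hx : ∀ σ ∈ Sig, x ∈ σ)
    (hxy : y ≠ x) (hy : ∃ σ ∈ Sig, y ∈ σ.take (f σ)) (hle : firstPos Sig f y ≤ firstPos Sig f x) :
    ∃ σ ∈ Sig, y ∈ σ.take (f σ) ∧ σ.idxOf y < σ.idxOf x := by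
  obtain ⟨σ, hσ, hyσ, hpos⟩ := exists_idxOf_eq_firstPos hy
  refine ⟨σ, hσ, hyσ, lt_of_not_ge fun hge => hxy ?_⟩
  have hy_lt : σ.idxOf y < f σ := (List.mem_take_iff_idxOf_lt (σ.take_subset _ hyσ)).1 hyσ
  have hxσ : x ∈ σ.take (f σ) := (List.mem_take_iff_idxOf_lt (hx σ hσ)).2 (hge.trans_lt hy_lt)
  refine ((List.idxOf_inj (hx σ hσ)).1 (le_antisymm hge ?_)).symm
  calc σ.idxOf y = firstPos Sig f y := hpos
    _ ≤ firstPos Sig f x := hle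
    _ ≤ σ.idxOf x := firstPos_le_idxOf hσ hxσ

theorem erase_eq_sup_take_min_idxOf {f : List α → ℕ} {x : α} (hx : ∀ σ ∈ Sig, x ∈ σ)
    (hmax : ∀ y ∈ Sig.sup (fun σ => (σ.take (f σ)).toFinset), firstPos Sig f y ≤ firstPos Sig f x) :
    (Sig.sup fun σ => (σ.take (f σ)).toFinset).erase x =
      Sig.sup fun σ => (σ.take (min (f σ) (σ.idxOf x))).toFinset := by
  ext y
  rw [Finset.mem_erase, mem_sup_take_toFinset, mem_sup_take_toFinset]
  constructor
  · rintro ⟨hyx, hy⟩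
    obtain ⟨σ, hσ, hyσ, hlt⟩ :=
      exists_idxOf_lt_of_firstPos_le hx hyx hy (hmax y (mem_sup_take_toFinset.2 hy))
    have hyσ' := σ.take_subset _ hyσ
    rw [List.mem_take_iff_idxOf_lt hyσ'] at hyσ
    exact ⟨σ, hσ, (List.mem_take_iff_idxOf_lt hyσ').2 (lt_min hyσ hlt)⟩
  · rintro ⟨σ, hσ, hy⟩
    have hyσ := σ.take_subset _ hy
    rw [List.mem_take_iff_idxOf_lt hyσ, lt_min_iff] at hy
    exact ⟨by rintro rfl; exact lt_irrefl _ hy.2, σ, hσ, (List.mem_take_iff_idxOf_lt hyσ).2 hy.1⟩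

theorem exists_erase_mem_lSigma {X S : Finset α} (hX : ∀ σ ∈ Sig, σ.toFinset = X)
    (hS : S ∈ LSigma Sig) (hne : S.Nonempty) : ∃ x ∈ S, S.erase x ∈ LSigma Sig := by
  have hSX := subset_of_mem_lSigma (fun σ hσ => (hX σ hσ).le) hS
  obtain ⟨f, rfl⟩ := hS
  obtain ⟨x, hxS, hmax⟩ := Finset.exists_max_image _ (firstPos Sig f) hne
  have hx : ∀ σ ∈ Sig, x ∈ σ := fun σ hσ => List.mem_toFinset.1 (hX σ hσ ▸ hSX hxS)
  exact ⟨x, hxS, _, erase_eq_sup_take_min_idxOf hx hmax⟩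

end lSigma

theorem stmt0_general {α : Type*} [DecidableEq α] (X : Finset α)
    (Sig : Finset (List α)) (hne : Sig.Nonempty)
    (henum : ∀ σ ∈ Sig, σ.Nodup ∧ σ.toFinset = X) :
    IsLearningSpace X (LSigma Sig) ∧ (∅ : Finset α) ∈ LSigma Sig ∧ X ∈ LSigma Sig := by
  have hX : ∀ σ ∈ Sig, σ.toFinset = X := fun σ hσ => (henum σ hσ).2
  have hXmem : X ∈ LSigma Sig := mem_lSigma_of_toFinset_eq hne hX
  refine ⟨⟨empty_mem_lSigma, fun _ => subset_of_mem_lSigma fun σ hσ => (hX σ hσ).le,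
    fun _ hx => ⟨X, hXmem, hx⟩, fun _ => exists_erase_mem_lSigma hX,
    fun _ hS _ hT => union_mem_lSigma hS hT⟩, empty_mem_lSigma, hXmem⟩

/-- If `X` is a finite set with at least one element and `Σ` is a nonempty finite set of
enumerations of `X`, then the family of all unions of prefixes of members of `Σ` is a
learning space on `X`; in particular it contains `∅` and `X`. -/
theorem stmt0 {α : Type*} [DecidableEq α] (X : Finset α) (hn : 1 ≤ X.card)
    (Sig : Finset (List α)) (hne : Sig.Nonempty)
    (henum : ∀ σ ∈ Sig, σ.Nodup ∧ σ.toFinset = X) :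
    IsLearningSpace X (LSigma Sig) ∧ (∅ : Finset α) ∈ LSigma Sig ∧ X ∈ LSigma Sig :=
  stmt0_general X Sig hne henum
end

section
/- Let 𝓛 be a learning space on a finite set X and let P ⊆ X. Then the projection 𝓛_P = {S ∩ P : S ∈ 𝓛} is a learning space on P: it contains the empty set, its union is P, it is closed under unions, and it is accessible. -/
lemma access_aux {α : Type*} [DecidableEq α] (X : Finset α) (L : Set (Finset α))
    (hL : IsLearningSpace X L) (P : Finset α) :
    ∀ n (S : Finset α), S.card = n → S ∈ L → (S ∩ P).Nonempty →
      ∃ x ∈ S ∩ P, ∃ S' ∈ L, (S ∩ P).erase x = S' ∩ P := by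
  obtain ⟨-, -, -, hacc, -⟩ := hL
  intro n
  induction n using Nat.strong_induction_on with
  | _ n ih =>
    intro S hcard hS hne
    have hSne : S.Nonempty := by
      obtain ⟨x, hx⟩ := hne
      exact ⟨x, (Finset.mem_inter.mp hx).1⟩
    obtain ⟨x, hxS, hSx⟩ := hacc S hS hSne
    by_cases hxP : x ∈ P
    · refine ⟨x, Finset.mem_inter.mpr ⟨hxS, hxP⟩, S.erase x, hSx, ?_⟩
      ext y
      simp only [Finset.mem_erase, Finset.mem_inter]
      tauto
    · have heq : S.erase x ∩ P = S ∩ P := by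
        ext y
        simp only [Finset.mem_erase, Finset.mem_inter]
        constructor
        · tauto
        · rintro ⟨hy, hyP⟩
          refine ⟨⟨fun h => hxP (h ▸ hyP), hy⟩, hyP⟩
      have hlt : (S.erase x).card < n := by
        have h0 : 0 < n := hcard ▸ Finset.card_pos.mpr hSne
        rw [Finset.card_erase_of_mem hxS, hcard]
        omega
      obtain ⟨y, hy, S', hS', hS'eq⟩ :=
        ih _ hlt (S.erase x) rfl hSx (heq ▸ hne)
      rw [heq] at hy hS'eq
      exact ⟨y, hy, S', hS', hS'eq⟩

/-- The projection `{S ∩ P : S ∈ 𝓛}` of a learning space `𝓛` on `X` onto a subset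
`P ⊆ X` is itself a learning space on `P`. -/
theorem stmt1 {α : Type*} [DecidableEq α] (X : Finset α) (L : Set (Finset α))
    (hL : IsLearningSpace X L) (P : Finset α) (hP : P ⊆ X) :
    IsLearningSpace P {T | ∃ S ∈ L, T = S ∩ P} := by
  obtain ⟨hemp, hsub, hcov, hacc, hun⟩ := hL
  refine ⟨⟨∅, hemp, by simp⟩, ?_, ?_, ?_, ?_⟩
  · rintro T ⟨S, hS, rfl⟩
    exact Finset.inter_subset_right
  · intro x hx
    obtain ⟨S, hS, hxS⟩ := hcov x (hP hx)
    exact ⟨S ∩ P, ⟨S, hS, rfl⟩, Finset.mem_inter.mpr ⟨hxS, hx⟩⟩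
  · rintro T ⟨S, hS, rfl⟩ hne
    obtain ⟨x, hx, S', hS', heq⟩ :=
      access_aux X L ⟨hemp, hsub, hcov, hacc, hun⟩ P S.card S rfl hS hne
    exact ⟨x, hx, S', hS', heq⟩
  · rintro T ⟨S, hS, rfl⟩ T' ⟨S', hS', rfl⟩
    exact ⟨S ∪ S', hun S hS S' hS', by rw [Finset.union_inter_distrib_right]⟩
end

section
/- Let 𝓛 be a learning space on a finite set X and let 𝓒 ⊆ 𝓛 be a subfamily that is totally ordered by inclusion (a chain of states). Then there exists a learning sequence σ of 𝓛 such that every member of 𝓒 is a prefix of σ. -/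
/-- A learning sequence of a learning space `L` on `X`: an enumeration of `X`
(each element occurring exactly once) every prefix of which is a state of `L`. -/
def IsLearningSequence {α : Type*} [DecidableEq α] (X : Finset α) (L : Set (Finset α))
    (σ : List α) : Prop :=
  σ.Nodup ∧ σ.toFinset = X ∧ ∀ i ≤ σ.length, (σ.take i).toFinset ∈ L

/-!
Any two states `S ⊆ T` of a learning space are joined by a path of states adding one element
at a time: accessibility of `T` together with union-closure shows that some `x ∈ T \ S` has
`S ∪ {x}` a state. Listing a chain of states in increasing order, ending with `X` itself, and
extending a learning path from each member to the next one yields the learning sequence.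
-/

def IsLearningPath {α : Type*} [DecidableEq α] (L : Set (Finset α)) (σ : List α) : Prop :=
  σ.Nodup ∧ ∀ ρ, ρ <+: σ → ρ.toFinset ∈ L

namespace IsLearningSpace

variable {α : Type*} [DecidableEq α] {X : Finset α} {L : Set (Finset α)}

theorem finite (hL : IsLearningSpace X L) : L.Finite :=
  X.powerset.finite_toSet.subset fun S hS => Finset.mem_powerset.2 (hL.2.1 S hS)

theorem univ_mem (hL : IsLearningSpace X L) : X ∈ L := by
  have hsup : hL.finite.toFinset.sup id ∈ L :=
    Finset.sup_mem L hL.1 hL.2.2.2.2 _ _ fun S hS => hL.finite.mem_toFinset.1 hS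
  convert hsup
  refine le_antisymm (fun x hx => ?_)
    (Finset.sup_le fun S hS => hL.2.1 S (hL.finite.mem_toFinset.1 hS))
  obtain ⟨S, hS, hxS⟩ := hL.2.2.1 x hx
  exact Finset.le_sup (f := id) (hL.finite.mem_toFinset.2 hS) hxS

theorem exists_insert_mem_of_not_subset (hL : IsLearningSpace X L) {S : Finset α} (hS : S ∈ L) :
    ∀ {T : Finset α}, T ∈ L → ¬ T ⊆ S → ∃ x ∈ T, x ∉ S ∧ insert x S ∈ L := by
  intro T
  induction T using Finset.strongInduction with
  | H T ih =>
    intro hT hTS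
    have hne : T.Nonempty :=
      Finset.nonempty_iff_ne_empty.2 fun h => hTS (h ▸ Finset.empty_subset S)
    obtain ⟨x, hxT, hTx⟩ := hL.2.2.2.1 T hT hne
    by_cases hsub : T.erase x ⊆ S
    · have hTsub : T ⊆ insert x S := Finset.subset_insert_iff.2 hsub
      have hxS : x ∉ S := fun hxS => hTS (by rwa [Finset.insert_eq_of_mem hxS] at hTsub)
      have hunion : S ∪ T = insert x S :=
        le_antisymm (Finset.union_subset (Finset.subset_insert x S) hTsub)
          (Finset.insert_subset (Finset.mem_union_right S hxT) Finset.subset_union_left)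
      exact ⟨x, hxT, hxS, hunion ▸ hL.2.2.2.2 S hS T hT⟩
    · obtain ⟨y, hyT, hyS, hy⟩ := ih _ (Finset.erase_ssubset hxT) hTx hsub
      exact ⟨y, Finset.mem_of_mem_erase hyT, hyS, hy⟩

end IsLearningSpace

namespace IsLearningPath

variable {α : Type*} [DecidableEq α] {X : Finset α} {L : Set (Finset α)}

theorem nil (hL : IsLearningSpace X L) : IsLearningPath L [] :=
  ⟨List.nodup_nil, fun ρ hρ => by simpa [List.prefix_nil.1 hρ] using hL.1⟩

theorem concat {σ : List α} (hσ : IsLearningPath L σ) {x : α} (hx : x ∉ σ)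
    (hσx : (σ ++ [x]).toFinset ∈ L) : IsLearningPath L (σ ++ [x]) := by
  refine ⟨List.nodup_append.2 ⟨hσ.1, List.nodup_singleton x, ?_⟩, fun ρ hρ => ?_⟩
  · rintro a ha b hb rfl
    exact hx (List.mem_singleton.1 hb ▸ ha)
  · rcases List.prefix_concat_iff.1 hρ with rfl | hρ
    exacts [hσx, hσ.2 ρ hρ]

theorem exists_extension {σ : List α} (hσ : IsLearningPath L σ) (hL : IsLearningSpace X L)
    {T : Finset α} (hT : T ∈ L) (hσT : σ.toFinset ⊆ T) :
    ∃ τ, IsLearningPath L τ ∧ σ <+: τ ∧ τ.toFinset = T := by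
  by_cases hTσ : T ⊆ σ.toFinset
  · exact ⟨σ, hσ, List.prefix_refl σ, le_antisymm hσT hTσ⟩
  obtain ⟨x, hxT, hxσ, hins⟩ :=
    hL.exists_insert_mem_of_not_subset (hσ.2 σ (List.prefix_refl σ)) hT hTσ
  have hσx : (σ ++ [x]).toFinset = insert x σ.toFinset := by
    ext
    simp
  obtain ⟨τ, hτ, hστ, hτT⟩ := exists_extension
    (hσ.concat (by simpa using hxσ) (hσx ▸ hins)) hL hT (hσx ▸ Finset.insert_subset hxT hσT)
  exact ⟨τ, hτ, (List.prefix_append σ [x]).trans hστ, hτT⟩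
termination_by (T \ σ.toFinset).card
decreasing_by
  rw [hσx, Finset.sdiff_insert]
  exact Finset.card_erase_lt_of_mem (Finset.mem_sdiff.2 ⟨hxT, hxσ⟩)

end IsLearningPath

namespace IsLearningSpace

variable {α : Type*} [DecidableEq α] {X : Finset α} {L : Set (Finset α)}

theorem exists_learningPath_through_chain (hL : IsLearningSpace X L) (F : Finset (Finset α))
    (hFL : ∀ S ∈ F, S ∈ L) (hF : ∀ S ∈ F, ∀ T ∈ F, S ⊆ T ∨ T ⊆ S) {T : Finset α} (hT : T ∈ L)
    (hFT : ∀ S ∈ F, S ⊆ T) :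
    ∃ τ, IsLearningPath L τ ∧ τ.toFinset = T ∧ ∀ S ∈ F, ∃ ρ, ρ <+: τ ∧ ρ.toFinset = S := by
  induction F using Finset.strongInduction generalizing T with
  | H F ih =>
    rcases F.eq_empty_or_nonempty with rfl | hne
    · obtain ⟨τ, hτ, -, hτT⟩ := (IsLearningPath.nil hL).exists_extension hL hT (by simp)
      exact ⟨τ, hτ, hτT, by simp⟩
    -- the largest member `M` of the chain is its union
    set M := F.sup' hne id
    have hMF : M ∈ F := Finset.sup'_mem (F : Set (Finset α)) (fun S hS S' hS' => by
      rcases hF S hS S' hS' with h | h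
      · rwa [sup_eq_right.2 h]
      · rwa [sup_eq_left.2 h]) F hne id fun _ h => h
    obtain ⟨σ, hσ, hσM, hσF⟩ := ih (F.erase M) (Finset.erase_ssubset hMF)
      (fun S hS => hFL S (Finset.mem_of_mem_erase hS))
      (fun S hS S' hS' => hF S (Finset.mem_of_mem_erase hS) S' (Finset.mem_of_mem_erase hS'))
      (hFL M hMF) (fun S hS => Finset.le_sup' id (Finset.mem_of_mem_erase hS))
    obtain ⟨τ, hτ, hστ, hτT⟩ := hσ.exists_extension hL hT (hσM.symm ▸ hFT M hMF)
    refine ⟨τ, hτ, hτT, fun S hS => ?_⟩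
    by_cases hSM : S = M
    · exact ⟨σ, hστ, hσM.trans hSM.symm⟩
    · obtain ⟨ρ, hρσ, hρS⟩ := hσF S (Finset.mem_erase.2 ⟨hSM, hS⟩)
      exact ⟨ρ, hρσ.trans hστ, hρS⟩

end IsLearningSpace

/-- For any chain `𝓒` of states of a learning space `𝓛` (totally ordered by inclusion),
there is a learning sequence of `𝓛` having every member of `𝓒` as a prefix. -/
theorem stmt2 {α : Type*} [DecidableEq α] (X : Finset α) (L : Set (Finset α))
    (hL : IsLearningSpace X L) (C : Set (Finset α)) (hCL : C ⊆ L)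
    (hchain : ∀ S ∈ C, ∀ T ∈ C, S ⊆ T ∨ T ⊆ S) :
    ∃ σ : List α, IsLearningSequence X L σ ∧
      ∀ S ∈ C, ∃ i, S = (σ.take i).toFinset := by
  have hC : C.Finite := hL.finite.subset hCL
  obtain ⟨τ, ⟨hnodup, hτ⟩, hτX, hτC⟩ := hL.exists_learningPath_through_chain hC.toFinset
    (fun S hS => hCL (hC.mem_toFinset.1 hS))
    (fun S hS T hT => hchain S (hC.mem_toFinset.1 hS) T (hC.mem_toFinset.1 hT))
    hL.univ_mem (fun S hS => hL.2.1 S (hCL (hC.mem_toFinset.1 hS)))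
  refine ⟨τ, ⟨hnodup, hτX, fun i _ => hτ _ (List.take_prefix i τ)⟩, fun S hS => ?_⟩
  obtain ⟨ρ, hρ, rfl⟩ := hτC S (hC.mem_toFinset.2 hS)
  exact ⟨ρ.length, by rw [← List.prefix_iff_eq_take.1 hρ]⟩
end

section
/- Let 𝓛 be a learning space on a finite set X, and call T a predecessor of a state S ∈ 𝓛 if T ∈ 𝓛 and T = S \ {x} for some x ∈ S. Let 𝓑 be the family of states of 𝓛 having exactly one predecessor. Then: (1) every state of 𝓛 is a union of members of 𝓑 (the empty state being the empty union); and (2) every subfamily 𝓖 ⊆ 𝓛 with the property that every state of 𝓛 is a union of members of 𝓖 satisfies 𝓑 ⊆ 𝓖. Hence 𝓑 is the unique minimal subfamily of 𝓛 generating 𝓛 under unions (the base of 𝓛). -/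
lemma ls_aug {α : Type*} [DecidableEq α] {L : Set (Finset α)}
    (hU : ∀ S ∈ L, ∀ T ∈ L, S ∪ T ∈ L)
    (hA : ∀ S ∈ L, S.Nonempty → ∃ x ∈ S, S.erase x ∈ L) :
    ∀ S ∈ L, ∀ B ∈ L, ¬ S ⊆ B → ∃ y ∈ S, y ∉ B ∧ insert y B ∈ L := by
  intro S
  induction S using Finset.strongInductionOn with
  | _ S ih =>
    intro hS B hB hnsub
    have hne : S.Nonempty := by
      rcases S.eq_empty_or_nonempty with rfl | h
      · exact absurd (Finset.empty_subset B) hnsub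
      · exact h
    obtain ⟨z, hz, hz'⟩ := hA S hS hne
    by_cases h : S.erase z ⊆ B
    · have hzB : z ∉ B := fun hzB => hnsub (fun w hw => by
        by_cases hwz : w = z
        · exact hwz ▸ hzB
        · exact h (Finset.mem_erase.mpr ⟨hwz, hw⟩))
      refine ⟨z, hz, hzB, ?_⟩
      have hmem : B ∪ S ∈ L := hU B hB S hS
      have heq : B ∪ S = insert z B := by
        ext w
        simp only [Finset.mem_union, Finset.mem_insert]
        constructor
        · rintro (hw | hw)
          · exact Or.inr hw
          · by_cases hwz : w = z
            · exact Or.inl hwz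
            · exact Or.inr (h (Finset.mem_erase.mpr ⟨hwz, hw⟩))
        · rintro (rfl | hw)
          · exact Or.inr hz
          · exact Or.inl hw
      exact heq ▸ hmem
    · obtain ⟨y, hy, hyB, hins⟩ := ih (S.erase z) (Finset.erase_ssubset hz) hz' B hB h
      exact ⟨y, Finset.mem_of_mem_erase hy, hyB, hins⟩

lemma ls_pred_avoiding {α : Type*} [DecidableEq α] {L : Set (Finset α)}
    (hU : ∀ S ∈ L, ∀ T ∈ L, S ∪ T ∈ L)
    (hA : ∀ S ∈ L, S.Nonempty → ∃ x ∈ S, S.erase x ∈ L) :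
    ∀ n : ℕ, ∀ S ∈ L, ∀ B ∈ L, B ⊆ S → B ≠ S → (S \ B).card = n →
      ∃ y ∈ S, y ∉ B ∧ S.erase y ∈ L := by
  intro n
  induction n using Nat.strong_induction_on with
  | _ n ih =>
    intro S hS B hB hsub hne hcard
    have hnsub : ¬ S ⊆ B := fun h => hne (Finset.Subset.antisymm hsub h)
    obtain ⟨y, hy, hyB, hins⟩ := ls_aug hU hA S hS B hB hnsub
    by_cases h : insert y B = S
    · refine ⟨y, hy, hyB, ?_⟩
      have : S.erase y = B := by rw [← h, Finset.erase_insert hyB]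
      exact this ▸ hB
    · have hsub' : insert y B ⊆ S := Finset.insert_subset hy hsub
      have hlt : (S \ insert y B).card < n := by
        subst hcard
        apply Finset.card_lt_card
        constructor
        · exact Finset.sdiff_subset_sdiff le_rfl (Finset.subset_insert y B)
        · intro hc
          have : y ∈ S \ insert y B := hc (Finset.mem_sdiff.mpr ⟨hy, hyB⟩)
          simp at this
      obtain ⟨y', hy', hy'B, hE⟩ := ih _ hlt S hS (insert y B) hins hsub' h rfl
      exact ⟨y', hy', fun hc => hy'B (Finset.mem_insert_of_mem hc), hE⟩




/-- `T` is a predecessor of `S` in the family `L`: `T ∈ L` and `T = S \ {x}` for some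
`x ∈ S`. -/
def IsPredOf {α : Type*} [DecidableEq α] (L : Set (Finset α)) (S T : Finset α) : Prop :=
  T ∈ L ∧ ∃ x ∈ S, T = S.erase x

/-- The base of a learning space: the family of states having exactly one predecessor. -/
def Base {α : Type*} [DecidableEq α] (L : Set (Finset α)) : Set (Finset α) :=
  { S | S ∈ L ∧ ∃! T, IsPredOf L S T }

/-- (1) Every state of a learning space `𝓛` is a union of members of the base `𝓑`
(the family of states having exactly one predecessor), and (2) any subfamily `𝓖 ⊆ 𝓛`
generating every state of `𝓛` as a union contains `𝓑`; hence `𝓑` is the unique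
minimal union-generating subfamily of `𝓛`. -/

theorem stmt3 {α : Type*} [DecidableEq α] (X : Finset α) (L : Set (Finset α))
    (hL : IsLearningSpace X L) :
    (∀ S ∈ L, ∃ F : Finset (Finset α), ↑F ⊆ Base L ∧ S = F.sup id) ∧
    (∀ G : Set (Finset α), G ⊆ L →
      (∀ S ∈ L, ∃ F : Finset (Finset α), ↑F ⊆ G ∧ S = F.sup id) → Base L ⊆ G) := by
  obtain ⟨hemp, hsubX, hcov, hA, hU⟩ := hL
  constructor
  · intro S
    induction S using Finset.strongInductionOn with
    | _ S ih =>
      intro hS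
      rcases S.eq_empty_or_nonempty with rfl | hne
      · exact ⟨∅, by simp, by simp⟩
      obtain ⟨x, hx, hx'⟩ := hA S hS hne
      obtain ⟨F₁, hF₁, hF₁s⟩ := ih (S.erase x) (Finset.erase_ssubset hx) hx'
      by_cases hb : S ∈ Base L
      · refine ⟨insert S F₁, ?_, ?_⟩
        · rw [Finset.coe_insert]
          exact Set.insert_subset hb hF₁
        · rw [Finset.sup_insert, ← hF₁s]
          simp only [id_eq, Finset.sup_eq_union]
          exact (Finset.union_eq_left.mpr (Finset.erase_subset x S)).symm
      · have hpx : IsPredOf L S (S.erase x) := ⟨hx', x, hx, rfl⟩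
        have hnex : ¬ ∃! T, IsPredOf L S T := fun h => hb ⟨hS, h⟩
        have : ∃ T, IsPredOf L S T ∧ T ≠ S.erase x := by
          by_contra hc
          push_neg at hc
          exact hnex ⟨S.erase x, hpx, fun T hT => by
            rcases eq_or_ne T (S.erase x) with h | h
            · exact h
            · exact absurd h (by simpa using hc T hT)⟩
        obtain ⟨T, ⟨hTL, y, hy, rfl⟩, hTne⟩ := this
        have hxy : y ≠ x := fun h => hTne (by rw [h])
        obtain ⟨F₂, hF₂, hF₂s⟩ := ih (S.erase y) (Finset.erase_ssubset hy) hTL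
        refine ⟨F₁ ∪ F₂, ?_, ?_⟩
        · rw [Finset.coe_union]
          exact Set.union_subset hF₁ hF₂
        · rw [Finset.sup_union, ← hF₁s, ← hF₂s, Finset.sup_eq_union]
          ext w
          simp only [Finset.mem_union, Finset.mem_erase]
          constructor
          · intro hw
            by_cases hwx : w = x
            · exact Or.inr ⟨by rw [hwx]; exact hxy.symm, hw⟩
            · exact Or.inl ⟨hwx, hw⟩
          · rintro (⟨_, hw⟩ | ⟨_, hw⟩) <;> exact hw
  · intro G hGL hgen S hSB
    obtain ⟨hSL, T, hT, huniq⟩ := hSB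
    obtain ⟨hTL, x, hx, rfl⟩ := hT
    obtain ⟨F, hFG, hFs⟩ := hgen S hSL
    have hx' : x ∈ F.sup id := hFs ▸ hx
    obtain ⟨B, hBF, hxB⟩ := Finset.mem_sup.mp hx'
    have hBS : B ⊆ S := by
      have := Finset.le_sup (f := id) hBF
      rw [← hFs] at this
      exact this
    have hBG : B ∈ G := hFG hBF
    have hBL : B ∈ L := hGL hBG
    rcases eq_or_ne B S with rfl | hne
    · exact hBG
    · exfalso
      obtain ⟨y, hy, hyB, hEy⟩ :=
        ls_pred_avoiding hU hA (S \ B).card S hSL B hBL hBS hne rfl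
      have : S.erase y = S.erase x := huniq (S.erase y) ⟨hEy, y, hy, rfl⟩
      have hxmem : x ∈ S.erase y := Finset.mem_erase.mpr ⟨fun h => hyB (h ▸ hxB), hx⟩
      rw [this] at hxmem
      exact (Finset.notMem_erase x S) hxmem
end

section
/- Let X be a finite set with n elements, let σ_0, …, σ_{k−1} be enumerations of X, and let 𝓛_Σ be the family of all unions of prefixes of these enumerations. For a subset S ⊆ X define mex_i(S) to be the least index j such that the j-th element σ_i(j) of σ_i does not belong to S (and mex_i(S) = n if S = X). Then for all S, T ∈ 𝓛_Σ: S ⊆ T if and only if mex_i(S) ≤ mex_i(T) for every 0 ≤ i < k. Consequently, the map sending S to the integer vector (mex_0(S), …, mex_{k−1}(S)) is an order embedding of (𝓛_Σ, ⊆) into ℤ^k with the componentwise order. -/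
/-!
Every union of prefixes `S` is the union of the longest prefixes of the `σ i` it contains,
`(σ i).take (mex (σ i) S)`. If `mex (σ i) S ≤ mex (σ i) T` for all `i`, each of these is a
prefix of `(σ i).take (mex (σ i) T) ⊆ T`, so `S ⊆ T`; the converse is monotonicity of `mex`.
-/

/-- `mex σ S`: the least index `j` such that the `j`-th element of `σ` does not belong
to `S` (equal to the length of `σ` if every element of `σ` belongs to `S`). -/
def mex {α : Type*} [DecidableEq α] (σ : List α) (S : Finset α) : ℕ :=
  (σ.takeWhile fun a => decide (a ∈ S)).length

section Mex

variable {α : Type*} [DecidableEq α]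

lemma take_mex (σ : List α) (S : Finset α) :
    σ.take (mex σ S) = σ.takeWhile fun a => decide (a ∈ S) :=
  (List.prefix_iff_eq_take.1 (List.takeWhile_prefix _)).symm

lemma mem_of_mem_take_mex {σ : List α} {S : Finset α} {a : α} (ha : a ∈ σ.take (mex σ S)) :
    a ∈ S := by
  rw [take_mex] at ha
  simpa using List.mem_takeWhile_imp ha

lemma take_prefix_take_mex {σ : List α} {S : Finset α} {m : ℕ}
    (h : ∀ a ∈ σ.take m, a ∈ S) :
    σ.take m <+: σ.take (mex σ S) := by
  rw [take_mex]
  conv_rhs => rw [← List.take_append_drop m σ]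
  rw [List.takeWhile_append_of_pos (by simpa using h)]
  exact List.prefix_append _ _

lemma mex_mono (σ : List α) {S T : Finset α} (h : S ⊆ T) : mex σ S ≤ mex σ T := by
  have hpre := take_prefix_take_mex (S := T) fun a ha => h (mem_of_mem_take_mex (σ := σ) ha)
  rw [take_mex, take_mex] at hpre
  exact hpre.length_le

end Mex

section PrefixUnion

variable {α ι : Type*} [DecidableEq α] [Fintype ι]

def IsPrefixUnion (σ : ι → List α) (S : Finset α) : Prop :=
  ∃ f : ι → ℕ, S = Finset.univ.sup fun i => ((σ i).take (f i)).toFinset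

lemma IsPrefixUnion.exists_mem_take_mex {σ : ι → List α} {S : Finset α}
    (hS : IsPrefixUnion σ S) {a : α} (ha : a ∈ S) :
    ∃ i, a ∈ (σ i).take (mex (σ i) S) := by
  obtain ⟨f, hf⟩ := hS
  obtain ⟨i, -, hai⟩ := Finset.mem_sup.1 (hf ▸ ha)
  have hprefix : ∀ b ∈ (σ i).take (f i), b ∈ S := fun b hb =>
    hf ▸ Finset.mem_sup.2 ⟨i, Finset.mem_univ i, List.mem_toFinset.2 hb⟩
  exact ⟨i, (take_prefix_take_mex hprefix).subset (List.mem_toFinset.1 hai)⟩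

lemma IsPrefixUnion.subset_iff_forall_mex_le {σ : ι → List α} {S : Finset α}
    (hS : IsPrefixUnion σ S) (T : Finset α) :
    S ⊆ T ↔ ∀ i, mex (σ i) S ≤ mex (σ i) T := by
  refine ⟨fun hST i => mex_mono _ hST, fun hle a ha => ?_⟩
  obtain ⟨i, hi⟩ := hS.exists_mem_take_mex ha
  exact mem_of_mem_take_mex (List.take_subset_take_left _ (hle i) hi)

end PrefixUnion

theorem stmt5_general {α : Type*} [DecidableEq α] (k : ℕ) (σ : Fin k → List α) :
    (∀ S ∈ { S : Finset α | ∃ f : Fin k → ℕ,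
        S = Finset.univ.sup fun i => ((σ i).take (f i)).toFinset },
      ∀ T ∈ { S : Finset α | ∃ f : Fin k → ℕ,
        S = Finset.univ.sup fun i => ((σ i).take (f i)).toFinset },
      (S ⊆ T ↔ ∀ i : Fin k, mex (σ i) S ≤ mex (σ i) T)) ∧
    ∃ e : { S : Finset α // ∃ f : Fin k → ℕ,
        S = Finset.univ.sup fun i => ((σ i).take (f i)).toFinset } ↪o (Fin k → ℤ),
      ∀ S, e S = fun i => (mex (σ i) S.1 : ℤ) := by
  refine ⟨fun S hS T _ => IsPrefixUnion.subset_iff_forall_mex_le hS T, ?_⟩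
  refine ⟨OrderEmbedding.ofMapLEIff (fun S i => (mex (σ i) S.1 : ℤ)) fun S T => ?_,
    fun _ => rfl⟩
  simpa [Pi.le_def] using (IsPrefixUnion.subset_iff_forall_mex_le S.2 T.1).symm

/-- For enumerations `σ 0, …, σ (k-1)` of an `n`-element set `X`, and `𝓛_Σ` the family
of all unions of prefixes of these enumerations: for `S, T ∈ 𝓛_Σ`, `S ⊆ T` iff
`mex_i S ≤ mex_i T` for all `i`; consequently `S ↦ (mex_0 S, …, mex_{k-1} S)` is an
order embedding of `(𝓛_Σ, ⊆)` into `ℤ^k` with the componentwise order. -/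
theorem stmt5 {α : Type*} [DecidableEq α] (X : Finset α) (k : ℕ) (σ : Fin k → List α)
    (hσ : ∀ i, (σ i).Nodup ∧ (σ i).toFinset = X) :
    (∀ S ∈ { S : Finset α | ∃ f : Fin k → ℕ,
        S = Finset.univ.sup fun i => ((σ i).take (f i)).toFinset },
      ∀ T ∈ { S : Finset α | ∃ f : Fin k → ℕ,
        S = Finset.univ.sup fun i => ((σ i).take (f i)).toFinset },
      (S ⊆ T ↔ ∀ i : Fin k, mex (σ i) S ≤ mex (σ i) T)) ∧
    ∃ e : { S : Finset α // ∃ f : Fin k → ℕ,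
        S = Finset.univ.sup fun i => ((σ i).take (f i)).toFinset } ↪o (Fin k → ℤ),
      ∀ S, e S = fun i => (mex (σ i) S.1 : ℤ) :=
  stmt5_general k σ
end

section
/- Let 𝓛 be a learning space on a finite set X with n ≥ 1 elements. Then there exists a set Σ of learning sequences of 𝓛 with |Σ| ≤ C(n, ⌊n/2⌋) (the binomial coefficient n choose ⌊n/2⌋) such that 𝓛_Σ = 𝓛. -/
/-!
de Bruijn's recursive construction splits the subsets of an `n`-set into symmetric chains; each
chain meets the middle level `⌊n/2⌋` exactly once and distinct chains are disjoint, so there are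
at most `C(n, ⌊n/2⌋)` of them. In a learning space, a feasible set `S` and a feasible `T ⊄ S` always
admit an `x ∈ T \ S` with `S ∪ {x}` feasible (peel `T` down by accessibility to the last stage
inside `S`, then take a union). Hence the feasible members of any chain can be threaded by a
single learning sequence. One sequence per chain then makes every feasible set a prefix, while
unions of prefixes are feasible by union-closure.
-/

namespace IsLearningSpace

variable {α : Type*} [DecidableEq α] {X : Finset α} {L : Set (Finset α)}

theorem exists_insert_mem (hL : IsLearningSpace X L) {S T : Finset α} (hS : S ∈ L)
    (hT : T ∈ L) (hTS : ¬T ⊆ S) : ∃ x ∈ T, x ∉ S ∧ insert x S ∈ L := by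
  induction T using Finset.strongInduction with
  | H T ih =>
  obtain ⟨a, haT, -⟩ := Finset.not_subset.1 hTS
  obtain ⟨y, hyT, hTy⟩ := hL.2.2.2.1 T hT ⟨a, haT⟩
  by_cases hyS : T.erase y ⊆ S
  · have hTeq : T = insert y (T.erase y) := (Finset.insert_erase hyT).symm
    have hyS' : y ∉ S := fun hy => hTS (hTeq ▸ Finset.insert_subset hy hyS)
    refine ⟨y, hyT, hyS', ?_⟩
    have hunion : S ∪ T = insert y S := by
      rw [hTeq, Finset.union_insert, Finset.union_eq_left.2 hyS]
    exact hunion ▸ hL.2.2.2.2 S hS T hT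
  · obtain ⟨x, hx, hxS, hins⟩ := ih _ (Finset.erase_ssubset hyT) hTy hyS
    exact ⟨x, Finset.mem_of_mem_erase hx, hxS, hins⟩

theorem exists_path_through_chain (hL : IsLearningSpace X L) {C : Finset (Finset α)}
    (hC : IsChain (· ⊆ ·) (C : Set (Finset α))) (hCL : ∀ T ∈ C, T ∈ L) {S : Finset α}
    (hS : S ∈ L) :
    ∃ l : List α, l.Nodup ∧ Disjoint S l.toFinset ∧ S ∪ l.toFinset = X ∧
      (∀ i, S ∪ (l.take i).toFinset ∈ L) ∧ ∀ T ∈ C, S ⊆ T → ∃ i, S ∪ (l.take i).toFinset = T := by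
  induction hk : (X \ S).card generalizing S with
  | zero =>
    have hSX : S = X := (hL.2.1 S hS).antisymm (Finset.sdiff_eq_empty_iff_subset.1
      (Finset.card_eq_zero.1 hk))
    refine ⟨[], List.nodup_nil, by simp, by simp [hSX], by simpa using hS, fun T hT hST => ?_⟩
    exact ⟨0, by simpa [hSX] using ((hL.2.1 T (hCL T hT)).antisymm (hSX ▸ hST)).symm⟩
  | succ k ih =>
    have hSX : S ⊂ X := Finset.ssubset_iff_subset_ne.2 ⟨hL.2.1 S hS, by rintro rfl; simp at hk⟩
    -- the next target: the smallest member of `C ∪ {X}` strictly above `S`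
    obtain ⟨T, hTmin⟩ := Finset.exists_minimal (s := insert X (C.filter (S ⊂ ·)))
      ⟨X, Finset.mem_insert_self _ _⟩
    have hTD := Finset.mem_insert.1 hTmin.1
    have hTL : T ∈ L := hTD.elim (· ▸ hL.univ_mem) fun h => hCL T (Finset.mem_filter.1 h).1
    have hST : S ⊂ T := hTD.elim (· ▸ hSX) fun h => (Finset.mem_filter.1 h).2
    obtain ⟨x, hxT, hxS, hins⟩ := hL.exists_insert_mem hS hTL hST.not_subset
    have hk' : (X \ insert x S).card = k := by
      rw [Finset.sdiff_insert, Finset.card_erase_of_mem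
        (Finset.mem_sdiff.2 ⟨hL.2.1 T hTL hxT, hxS⟩), hk, Nat.add_sub_cancel]
    obtain ⟨l, hnd, hdisj, hunion, hpre, hthrough⟩ := ih hins hk'
    have hxl : x ∉ l.toFinset := Finset.disjoint_left.1 hdisj (Finset.mem_insert_self x S)
    refine ⟨x :: l, List.nodup_cons.2 ⟨by simpa using hxl, hnd⟩, ?_, ?_, ?_, ?_⟩
    · simpa [Finset.disjoint_insert_right, hxS] using (Finset.disjoint_insert_left.1 hdisj).2
    · simpa [Finset.union_insert] using hunion
    · rintro (_ | i)
      · simpa using hS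
      · simpa [Finset.union_insert] using hpre i
    · intro T' hT' hST'
      rcases hST'.eq_or_ssubset with rfl | hST'
      · exact ⟨0, by simp⟩
      have hTT' : T ⊆ T' := by
        have hT'D : T' ∈ insert X (C.filter (S ⊂ ·)) :=
          Finset.mem_insert_of_mem (Finset.mem_filter.2 ⟨hT', hST'⟩)
        have hcomp : T ⊆ T' ∨ T' ⊆ T := hTD.elim
          (fun h => Or.inr (h ▸ hL.2.1 T' (hCL T' hT')))
          fun h => hC.total (Finset.mem_filter.1 h).1 hT'
        exact hcomp.elim id (hTmin.2 hT'D)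
      obtain ⟨i, hi⟩ := hthrough T' hT' (Finset.insert_subset (hTT' hxT) hST'.subset)
      exact ⟨i + 1, by simpa [Finset.union_insert] using hi⟩

end IsLearningSpace

namespace DeBruijn

variable {α : Type*} [DecidableEq α]

/-- `(B, p)` encodes the saturated chain of the sets `B ∪ t`, `t` a suffix of `p`, listed from
the top `B ∪ p` down to `B`. -/
def chainSets (c : Finset α × List α) : List (Finset α) :=
  c.2.tails.map (c.1 ∪ ·.toFinset)

/-- de Bruijn's step for a new element `x`: the chain grows by `x` on top, and its members other
than the top, each with `x` added, form a second chain (when there are any). -/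
def step (x : α) : Finset α × List α → List (Finset α × List α)
  | (B, []) => [(B, [x])]
  | (B, y :: q) => [(B, x :: y :: q), (insert x B, q)]

/-- A symmetric chain decomposition of the subsets of `l.toFinset`. -/
def chains : List α → List (Finset α × List α)
  | [] => [(∅, [])]
  | x :: xs => (chains xs).flatMap (step x)

def allSets (l : List α) : List (Finset α) :=
  (chains l).flatMap chainSets

theorem chainSets_cons (B : Finset α) (x : α) (p : List α) :
    chainSets (B, x :: p) = insert x (B ∪ p.toFinset) :: chainSets (B, p) := by
  simp [chainSets, Finset.union_insert]

theorem chainSets_insert (B : Finset α) (x : α) (p : List α) :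
    chainSets (insert x B, p) = (chainSets (B, p)).map (insert x) := by
  simp [chainSets, Function.comp_def, Finset.insert_union]

theorem top_mem_chainSets (B : Finset α) (p : List α) : B ∪ p.toFinset ∈ chainSets (B, p) :=
  List.mem_map.2 ⟨p, (List.mem_tails _ _).2 (List.suffix_refl p), rfl⟩

theorem isChain_chainSets (c : Finset α × List α) :
    IsChain (· ⊆ ·) {S | S ∈ chainSets c} := by
  have hmono {t u : List α} (h : t <:+ u) : c.1 ∪ t.toFinset ⊆ c.1 ∪ u.toFinset :=
    Finset.union_subset_union_right fun a ha => by simpa using h.subset (by simpa using ha)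
  intro S hS T hT _
  obtain ⟨t, ht, rfl⟩ := List.mem_map.1 hS
  obtain ⟨u, hu, rfl⟩ := List.mem_map.1 hT
  rw [List.mem_tails] at ht hu
  exact (List.suffix_or_suffix_of_suffix ht hu).imp hmono hmono

theorem flatMap_step_perm (x : α) (c : Finset α × List α) :
    ((step x c).flatMap chainSets).Perm (chainSets c ++ (chainSets c).map (insert x)) := by
  obtain ⟨B, _ | ⟨y, q⟩⟩ := c
  · simpa [step, chainSets] using List.Perm.swap B (insert x B) []
  · simp only [step, List.flatMap_cons, List.flatMap_nil, List.append_nil, chainSets_cons B x,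
      chainSets_cons B y, chainSets_insert, List.map_cons, List.toFinset_cons, Finset.union_insert]
    exact List.perm_middle.symm

theorem allSets_cons_perm (x : α) (xs : List α) :
    (allSets (x :: xs)).Perm (allSets xs ++ (allSets xs).map (insert x)) := by
  rw [allSets, chains, List.flatMap_assoc, allSets, List.map_flatMap]
  exact (List.Perm.flatMap_left _ fun c _ => flatMap_step_perm x c).trans
    (List.flatMap_append_perm _ _ _).symm

theorem subset_of_mem_allSets {l : List α} {S : Finset α} (hS : S ∈ allSets l) :
    S ⊆ l.toFinset := by
  induction l generalizing S with
  | nil => simp [allSets, chains, chainSets] at hS; simp [hS]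
  | cons x xs ih =>
    rcases List.mem_append.1 ((allSets_cons_perm x xs).mem_iff.1 hS) with hS | hS
    · exact (ih hS).trans (by simp [Finset.subset_insert])
    · obtain ⟨T, hT, rfl⟩ := List.mem_map.1 hS
      simpa using Finset.insert_subset_insert x (ih hT)

theorem mem_allSets_of_subset {l : List α} {S : Finset α} (hS : S ⊆ l.toFinset) :
    S ∈ allSets l := by
  induction l generalizing S with
  | nil => simp_all [allSets, chains, chainSets]
  | cons x xs ih =>
    rw [(allSets_cons_perm x xs).mem_iff, List.mem_append, List.mem_map]
    by_cases hx : x ∈ S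
    · exact Or.inr ⟨S.erase x, ih (Finset.subset_insert_iff.1 (by simpa using hS)),
        Finset.insert_erase hx⟩
    · exact Or.inl (ih fun a ha => by
        simpa [show a ≠ x by rintro rfl; exact hx ha] using hS ha)

theorem nodup_allSets {l : List α} (hl : l.Nodup) : (allSets l).Nodup := by
  induction l with
  | nil => simp [allSets, chains, chainSets]
  | cons x xs ih =>
    obtain ⟨hx, hxs⟩ := List.nodup_cons.1 hl
    have hxS : ∀ S ∈ allSets xs, x ∉ S := fun S hS hxS => hx (by
      simpa using subset_of_mem_allSets hS hxS)
    rw [(allSets_cons_perm x xs).nodup_iff]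
    refine (ih hxs).append ((ih hxs).map_on fun S hS T hT h => ?_) fun S hS hS' => ?_
    · rw [← Finset.erase_insert (hxS S hS), h, Finset.erase_insert (hxS T hT)]
    · obtain ⟨T, -, rfl⟩ := List.mem_map.1 hS'
      exact hxS _ hS (Finset.mem_insert_self x T)

theorem chains_symmetric {l : List α} (hl : l.Nodup) :
    ∀ c ∈ chains l,
      c.2.Nodup ∧ Disjoint c.1 c.2.toFinset ∧ 2 * c.1.card + c.2.length = l.length := by
  induction l with
  | nil => simp [chains]
  | cons x xs ih =>
    obtain ⟨hx, hxs⟩ := List.nodup_cons.1 hl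
    intro c hc
    obtain ⟨⟨B, p⟩, hBp, hc⟩ := List.mem_flatMap.1 hc
    obtain ⟨hp, hBp', hcard⟩ := ih hxs _ hBp
    have hxBp : x ∉ B ∪ p.toFinset := fun h => hx (by
      simpa using subset_of_mem_allSets
        (List.mem_flatMap.2 ⟨_, hBp, top_mem_chainSets B p⟩) h)
    rw [Finset.mem_union, not_or] at hxBp
    rcases p with _ | ⟨y, q⟩
    · simp only [step, List.mem_singleton] at hc
      subst hc
      simp_all
    · simp only [step, List.mem_cons, List.not_mem_nil, or_false] at hc
      rcases hc with rfl | rfl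
      · simp_all
        omega
      · simp_all [Finset.card_insert_of_notMem]
        omega

theorem exists_mem_chainSets_card_eq {B : Finset α} {p : List α} (hp : p.Nodup)
    (hBp : Disjoint B p.toFinset) {k : ℕ} (hBk : B.card ≤ k) (hkp : k ≤ B.card + p.length) :
    ∃ S ∈ chainSets (B, p), S.card = k := by
  refine ⟨B ∪ (p.drop (p.length - (k - B.card))).toFinset,
    List.mem_map.2 ⟨_, (List.mem_tails _ _).2 (List.drop_suffix _ _), rfl⟩, ?_⟩
  rw [Finset.card_union_of_disjoint (hBp.mono_right fun a ha => by
    simpa using (List.drop_subset _ p) (List.mem_toFinset.1 ha)),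
    List.toFinset_card_of_nodup (hp.sublist (List.drop_sublist _ _)), List.length_drop]
  omega

theorem length_chains_le_choose {l : List α} (hl : l.Nodup) :
    (chains l).length ≤ l.length.choose (l.length / 2) := by
  have hmid : ∀ c ∈ chains l, ∃ S ∈ chainSets c, S.card = l.length / 2 := by
    intro c hc
    obtain ⟨hp, hBp, hcard⟩ := chains_symmetric hl c hc
    exact exists_mem_chainSets_card_eq hp hBp (by omega) (by omega)
  choose! mid hmid_mem hmid_card using hmid
  have hdisj := (List.nodup_flatMap.1 (nodup_allSets hl)).2
  have hnodup : ((chains l).map mid).Nodup :=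
    (hdisj.imp_of_mem fun {c d} hc hd hcd (h : mid c = mid d) =>
      hcd (hmid_mem c hc) (h ▸ hmid_mem d hd)).map mid fun _ _ => id
  have hsub : ((chains l).map mid).toFinset ⊆ l.toFinset.powersetCard (l.length / 2) := by
    intro S hS
    obtain ⟨c, hc, rfl⟩ := List.mem_map.1 (List.mem_toFinset.1 hS)
    exact Finset.mem_powersetCard.2 ⟨subset_of_mem_allSets
      (List.mem_flatMap.2 ⟨c, hc, hmid_mem c hc⟩), hmid_card c hc⟩
  calc (chains l).length = ((chains l).map mid).toFinset.card := by
        rw [List.toFinset_card_of_nodup hnodup, List.length_map]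
    _ ≤ (l.toFinset.powersetCard (l.length / 2)).card := Finset.card_le_card hsub
    _ = l.length.choose (l.length / 2) := by
        rw [Finset.card_powersetCard, List.toFinset_card_of_nodup hl]

end DeBruijn

section LearningSequences

variable {α : Type*} [DecidableEq α] {X : Finset α} {L : Set (Finset α)}

theorem IsLearningSpace.exists_isLearningSequence_through_chain (hL : IsLearningSpace X L)
    {C : Finset (Finset α)} (hC : IsChain (· ⊆ ·) (C : Set (Finset α))) (hCL : ∀ T ∈ C, T ∈ L) :
    ∃ σ, IsLearningSequence X L σ ∧ ∀ T ∈ C, ∃ i, (σ.take i).toFinset = T := by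
  obtain ⟨σ, hnd, -, hX, hpre, hthrough⟩ := hL.exists_path_through_chain hC hCL hL.1
  refine ⟨σ, ⟨hnd, by simpa using hX, fun i _ => by simpa using hpre i⟩, fun T hT => ?_⟩
  simpa using hthrough T hT (Finset.empty_subset T)

theorem IsLearningSequence.take_mem {σ : List α} (hσ : IsLearningSequence X L σ) (i : ℕ) :
    (σ.take i).toFinset ∈ L := by
  rcases le_or_gt i σ.length with hi | hi
  · exact hσ.2.2 i hi
  · simpa [List.take_of_length_le hi.le] using hσ.2.2 σ.length le_rfl

theorem lSigma_subset (hL : IsLearningSpace X L) {Sig : Finset (List α)}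
    (hSig : ∀ σ ∈ Sig, IsLearningSequence X L σ) : LSigma Sig ⊆ L := by
  rintro _ ⟨f, rfl⟩
  exact Finset.sup_induction hL.1 hL.2.2.2.2 fun σ hσ => (hSig σ hσ).take_mem (f σ)

theorem take_mem_lSigma {Sig : Finset (List α)} {σ : List α} (hσ : σ ∈ Sig) (i : ℕ) :
    (σ.take i).toFinset ∈ LSigma Sig := by
  refine ⟨fun τ => if τ = σ then i else 0, le_antisymm ?_ (Finset.sup_le fun τ _ => ?_)⟩
  · simpa using Finset.le_sup (f := fun τ => (τ.take (if τ = σ then i else 0)).toFinset) hσ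
  · by_cases hτ : τ = σ <;> simp [hτ]

end LearningSequences

open DeBruijn in
theorem stmt6_general {α : Type*} [DecidableEq α] (X : Finset α)
    (L : Set (Finset α)) (hL : IsLearningSpace X L) :
    ∃ Sig : Finset (List α),
      Sig.card ≤ Nat.choose X.card (X.card / 2) ∧
      (∀ σ ∈ Sig, IsLearningSequence X L σ) ∧
      LSigma Sig = L := by
  classical
  have hchain (c : Finset α × List α) : IsChain (· ⊆ ·)
      (((chainSets c).toFinset.filter (· ∈ L) : Finset (Finset α)) : Set (Finset α)) :=
    (isChain_chainSets c).mono fun S hS => by simp_all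
  choose seq hseq hthrough using fun c =>
    hL.exists_isLearningSequence_through_chain (hchain c) (by simp)
  set Sig := ((chains X.toList).map seq).toFinset
  have hSig : ∀ σ ∈ Sig, IsLearningSequence X L σ := by
    simp only [Sig, List.mem_toFinset, List.mem_map]
    rintro _ ⟨c, -, rfl⟩
    exact hseq c
  refine ⟨Sig, ?_, hSig, (lSigma_subset hL hSig).antisymm fun S hS => ?_⟩
  · calc Sig.card ≤ (chains X.toList).length :=
        (List.toFinset_card_le _).trans (List.length_map _).le
      _ ≤ X.card.choose (X.card / 2) := by
        simpa using length_chains_le_choose X.nodup_toList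
  obtain ⟨c, hc, hSc⟩ := List.mem_flatMap.1
    (mem_allSets_of_subset (l := X.toList) (by simpa using hL.2.1 S hS))
  obtain ⟨i, rfl⟩ := hthrough c S (by simp [hSc, hS])
  exact take_mem_lSigma (List.mem_toFinset.2 (List.mem_map_of_mem hc)) i

/-- Every learning space `𝓛` on a set of `n ≥ 1` elements can be defined by a set `Σ`
of at most `C(n, ⌊n/2⌋)` learning sequences, i.e. with `𝓛_Σ = 𝓛`. -/
theorem stmt6 {α : Type*} [DecidableEq α] (X : Finset α) (hn : 1 ≤ X.card)
    (L : Set (Finset α)) (hL : IsLearningSpace X L) :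
    ∃ Sig : Finset (List α),
      Sig.card ≤ Nat.choose X.card (X.card / 2) ∧
      (∀ σ ∈ Sig, IsLearningSequence X L σ) ∧
      LSigma Sig = L :=
  stmt6_general X L hL
end

section
/- Let 𝓛 be a learning space on a finite set X and let K, U ⊆ X. Define the fiber 𝓛(K,U) = {S ∈ 𝓛 : K ⊆ S and S ∩ U = ∅}. Then there exists a learning space 𝓛′ (on some finite set) such that 𝓛(K,U) is an upper subfamily of 𝓛′, i.e., 𝓛(K,U) ⊆ 𝓛′ and whenever A ∈ 𝓛(K,U), B ∈ 𝓛′, and A ⊆ B, then B ∈ 𝓛(K,U). -/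
/-- The fiber `𝓛(K,U)`: states of `𝓛` containing `K` and disjoint from `U`. -/
def Fiber {α : Type*} [DecidableEq α] (L : Set (Finset α)) (K U : Finset α) :
    Set (Finset α) :=
  { S | S ∈ L ∧ K ⊆ S ∧ S ∩ U = ∅ }

/-- Every fiber `𝓛(K,U)` of a learning space `𝓛` on `X` is an upper subfamily of some
learning space `𝓛′` (on some finite set `Y`): `𝓛(K,U) ⊆ 𝓛′`, and whenever
`A ∈ 𝓛(K,U)`, `B ∈ 𝓛′`, and `A ⊆ B`, then `B ∈ 𝓛(K,U)`. -/
theorem stmt8 {α : Type*} [DecidableEq α] (X : Finset α) (L : Set (Finset α))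
    (hL : IsLearningSpace X L) (K U : Finset α) (hK : K ⊆ X) (hU : U ⊆ X) :
    ∃ (Y : Finset α) (L' : Set (Finset α)),
      IsLearningSpace Y L' ∧
      Fiber L K U ⊆ L' ∧
      ∀ A ∈ Fiber L K U, ∀ B ∈ L', A ⊆ B → B ∈ Fiber L K U := by
  classical
  obtain ⟨hempty, hsub, _hcover, hacc, hunion⟩ := hL
  -- L' : states of L disjoint from U
  refine ⟨X.filter (fun x => ∃ S ∈ L, S ∩ U = ∅ ∧ x ∈ S),
    {S | S ∈ L ∧ S ∩ U = ∅}, ?_, ?_, ?_⟩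
  · refine ⟨⟨hempty, by simp⟩, ?_, ?_, ?_, ?_⟩
    · rintro S ⟨hSL, hSU⟩ x hx
      exact Finset.mem_filter.mpr ⟨hsub S hSL hx, S, hSL, hSU, hx⟩
    · intro x hx
      obtain ⟨-, S, hSL, hSU, hxS⟩ := Finset.mem_filter.mp hx
      exact ⟨S, ⟨hSL, hSU⟩, hxS⟩
    · rintro S ⟨hSL, hSU⟩ hSne
      obtain ⟨x, hxS, hxL⟩ := hacc S hSL hSne
      refine ⟨x, hxS, hxL, ?_⟩
      have : S.erase x ∩ U ⊆ S ∩ U :=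
        Finset.inter_subset_inter (Finset.erase_subset x S) le_rfl
      rw [hSU] at this
      exact Finset.subset_empty.mp this
    · rintro S ⟨hSL, hSU⟩ T ⟨hTL, hTU⟩
      refine ⟨hunion S hSL T hTL, ?_⟩
      rw [Finset.union_inter_distrib_right, hSU, hTU, Finset.union_empty]
  · rintro S ⟨hSL, -, hSU⟩
    exact ⟨hSL, hSU⟩
  · rintro A ⟨-, hKA, -⟩ B ⟨hBL, hBU⟩ hAB
    exact ⟨hBL, hKA.trans hAB, hBU⟩
end

section
/- Let 𝓛 be a learning space on a finite set X, let 𝓛⁺ be a nonempty upper subfamily of 𝓛, and let x be an element not in X. Then 𝓛′ = 𝓛 ∪ {S ∪ {x} : S ∈ 𝓛⁺} is a learning space on X ∪ {x}, and the fiber 𝓛′({x}, ∅) = {T ∈ 𝓛′ : x ∈ T} equals {S ∪ {x} : S ∈ 𝓛⁺}. Hence every upper subfamily of a learning space can be represented as a fiber of a learning space. -/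
/-- Let `𝓛⁺` be a nonempty upper subfamily of a learning space `𝓛` on `X` and let
`x ∉ X`. Then `𝓛′ = 𝓛 ∪ {S ∪ {x} : S ∈ 𝓛⁺}` is a learning space on `X ∪ {x}` and the
fiber `𝓛′({x}, ∅) = {T ∈ 𝓛′ : x ∈ T}` equals `{S ∪ {x} : S ∈ 𝓛⁺}`; hence every upper
subfamily of a learning space is a fiber of a learning space. -/
theorem stmt9 {α : Type*} [DecidableEq α] (X : Finset α) (L : Set (Finset α))
    (hL : IsLearningSpace X L) (Lp : Set (Finset α)) (hsub : Lp ⊆ L) (hne : Lp.Nonempty)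
    (hupper : ∀ S ∈ Lp, ∀ T ∈ L, S ⊆ T → T ∈ Lp)
    (x : α) (hx : x ∉ X) :
    IsLearningSpace (insert x X) (L ∪ (fun S => insert x S) '' Lp) ∧
    { T ∈ L ∪ (fun S => insert x S) '' Lp | x ∈ T } = (fun S => insert x S) '' Lp := by
  obtain ⟨hemp, hX, hcov, hacc, hun⟩ := hL
  have hxnot : ∀ S ∈ L, x ∉ S := fun S hS hxS => hx (hX S hS hxS)
  constructor
  · refine ⟨Or.inl hemp, ?_, ?_, ?_, ?_⟩
    · rintro S (hS | ⟨T, hT, rfl⟩)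
      · exact (hX S hS).trans (Finset.subset_insert _ _)
      · exact Finset.insert_subset_insert x (hX T (hsub hT))
    · intro y hy
      rcases Finset.mem_insert.mp hy with rfl | hy
      · obtain ⟨S, hS⟩ := hne
        exact ⟨insert y S, Or.inr ⟨S, hS, rfl⟩, Finset.mem_insert_self _ _⟩
      · obtain ⟨S, hS, hyS⟩ := hcov y hy
        exact ⟨S, Or.inl hS, hyS⟩
    · rintro S (hS | ⟨T, hT, rfl⟩) hSne
      · obtain ⟨y, hy, hy'⟩ := hacc S hS hSne
        exact ⟨y, hy, Or.inl hy'⟩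
      · refine ⟨x, Finset.mem_insert_self _ _, ?_⟩
        simp only [Finset.erase_insert (hxnot T (hsub hT))]
        exact Or.inl (hsub hT)
    · rintro S (hS | ⟨S', hS', rfl⟩) T (hT | ⟨T', hT', rfl⟩)
      · exact Or.inl (hun S hS T hT)
      · refine Or.inr ⟨S ∪ T', ?_, ?_⟩
        · exact hupper T' hT' _ (hun S hS T' (hsub hT')) Finset.subset_union_right
        · simp [Finset.union_insert]
      · refine Or.inr ⟨S' ∪ T, ?_, ?_⟩
        · exact hupper S' hS' _ (hun S' (hsub hS') T hT) Finset.subset_union_left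
        · simp [Finset.insert_union]
      · refine Or.inr ⟨S' ∪ T', ?_, ?_⟩
        · exact hupper S' hS' _ (hun S' (hsub hS') T' (hsub hT')) Finset.subset_union_left
        · simp [Finset.insert_union, Finset.union_insert]
  · ext T
    constructor
    · rintro ⟨hT | hT, hxT⟩
      · exact absurd hxT (hxnot T hT)
      · exact hT
    · rintro ⟨S, hS, rfl⟩
      exact ⟨Or.inr ⟨S, hS, rfl⟩, Finset.mem_insert_self _ _⟩
end

section
/- Every learning space has separated equalizers: if 𝓛 is a learning space on a finite set X, and X₀, Y₀, A, B ∈ 𝓛 satisfy X₀ ⊆ Y₀, X₀ ∪ A ≠ X₀ ∪ B, Y₀ ∪ A = Y₀ ∪ B, X₀ ∪ A ≠ Y₀ ∪ A, and X₀ ∪ B ≠ Y₀ ∪ B, then there exists Z ∈ 𝓛 with X₀ ⊊ Z ⊊ Y₀. -/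
/-- Upward gradation: if `T ⊈ S` in an accessible union-closed family,
then `insert x S` is a state for some `x ∈ T \ S`. -/
lemma upward_grad {α : Type*} [DecidableEq α] (L : Set (Finset α))
    (hacc : ∀ S ∈ L, S.Nonempty → ∃ x ∈ S, S.erase x ∈ L)
    (hun : ∀ S ∈ L, ∀ T ∈ L, S ∪ T ∈ L) :
    ∀ T, T ∈ L → ∀ S ∈ L, ¬ T ⊆ S → ∃ x ∈ T, x ∉ S ∧ insert x S ∈ L := by
  intro T
  induction T using Finset.strongInduction with
  | _ T ih =>
    intro hT S hS hTS
    have hne : T.Nonempty := by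
      rcases T.eq_empty_or_nonempty with h | h
      · exact absurd (h ▸ Finset.empty_subset S) hTS
      · exact h
    obtain ⟨y, hy, hT'⟩ := hacc T hT hne
    by_cases h : T.erase y ⊆ S
    · have hyS : y ∉ S := by
        intro hyS
        apply hTS
        intro z hz
        by_cases hzy : z = y
        · exact hzy ▸ hyS
        · exact h (Finset.mem_erase.mpr ⟨hzy, hz⟩)
      refine ⟨y, hy, hyS, ?_⟩
      have hST : S ∪ T ∈ L := hun S hS T hT
      have : S ∪ T = insert y S := by
        ext z
        simp only [Finset.mem_union, Finset.mem_insert]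
        constructor
        · rintro (hz | hz)
          · exact Or.inr hz
          · by_cases hzy : z = y
            · exact Or.inl hzy
            · exact Or.inr (h (Finset.mem_erase.mpr ⟨hzy, hz⟩))
        · rintro (rfl | hz)
          · exact Or.inr hy
          · exact Or.inl hz
      rwa [this] at hST
    · obtain ⟨x, hx, hxS, hxL⟩ := ih (T.erase y) (Finset.erase_ssubset hy) hT' S hS h
      exact ⟨x, Finset.mem_of_mem_erase hx, hxS, hxL⟩

/-- Every learning space has separated equalizers: if `X₀ ⊆ Y₀` is an equalizing pair
for `A, B` (all states of the learning space `𝓛`), then some state `Z ∈ 𝓛` lies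
strictly between `X₀` and `Y₀`. -/
theorem stmt10 {α : Type*} [DecidableEq α] (X : Finset α) (L : Set (Finset α))
    (hL : IsLearningSpace X L) (X₀ Y₀ A B : Finset α)
    (hX₀ : X₀ ∈ L) (hY₀ : Y₀ ∈ L) (hA : A ∈ L) (hB : B ∈ L)
    (hsub : X₀ ⊆ Y₀)
    (h1 : X₀ ∪ A ≠ X₀ ∪ B) (h2 : Y₀ ∪ A = Y₀ ∪ B)
    (h3 : X₀ ∪ A ≠ Y₀ ∪ A) (h4 : X₀ ∪ B ≠ Y₀ ∪ B) :
    ∃ Z ∈ L, X₀ ⊂ Z ∧ Z ⊂ Y₀ := by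
  obtain ⟨hemp, hsubX, hcov, hacc, hun⟩ := hL
  have hne : ¬ Y₀ ⊆ X₀ := by
    intro h
    exact h3 (by rw [Finset.Subset.antisymm hsub h])
  obtain ⟨x, hxY, hxX, hZL⟩ := upward_grad L hacc hun Y₀ hY₀ X₀ hX₀ hne
  refine ⟨insert x X₀, hZL, ?_, ?_⟩
  · exact Finset.ssubset_insert hxX
  · have hZY : insert x X₀ ⊆ Y₀ := Finset.insert_subset hxY hsub
    refine ⟨hZY, ?_⟩
    intro hYZ
    have hY : Y₀ = insert x X₀ := Finset.Subset.antisymm hYZ hZY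
    have hxA : x ∉ A := by
      intro hxA
      apply h3
      rw [hY]
      ext z
      simp only [Finset.mem_union, Finset.mem_insert]
      constructor
      · tauto
      · rintro ((rfl | hz) | hz) <;> tauto
    have hxB : x ∉ B := by
      intro hxB
      apply h4
      rw [hY]
      ext z
      simp only [Finset.mem_union, Finset.mem_insert]
      constructor
      · tauto
      · rintro ((rfl | hz) | hz) <;> tauto
    apply h1
    have e1 : Y₀ ∪ A = insert x (X₀ ∪ A) := by
      rw [hY, Finset.insert_union]
    have e2 : Y₀ ∪ B = insert x (X₀ ∪ B) := by
      rw [hY, Finset.insert_union]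
    have hxXA : x ∉ X₀ ∪ A := by simp [hxX, hxA]
    have hxXB : x ∉ X₀ ∪ B := by simp [hxX, hxB]
    have := h2
    rw [e1, e2] at this
    ext z
    constructor
    · intro hz
      have : z ∈ insert x (X₀ ∪ B) := this ▸ Finset.mem_insert_of_mem hz
      rcases Finset.mem_insert.mp this with rfl | hz'
      · exact absurd hz hxXA
      · exact hz'
    · intro hz
      have : z ∈ insert x (X₀ ∪ A) := this ▸ Finset.mem_insert_of_mem hz
      rcases Finset.mem_insert.mp this with rfl | hz'
      · exact absurd hz hxXB
      · exact hz'
end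

section
/- Let (L, ⊔) be a finite join-semilattice. Then the map x ↦ N(x) is injective: for all x, y ∈ L, if N(x) = N(y) then x = y. Consequently, since N(x ⊔ y) = N(x) ∪ N(y), L is isomorphic as a semilattice to the family {N(x) : x ∈ L} of sets under the union operation. -/
/-!
If `¬ y ≤ x`, take `s ≥ x` maximal with `¬ y ≤ s` (it exists by finiteness). Every `z > s` lies
above `y`, hence above `s ⊔ y > s`; so `s` is singular with successor `s ⊔ y`, and `s` separates
`N y` from `N x`. Thus `N x ⊆ N y ↔ x ≤ y`, and `N` is an injective join-homomorphism into
`(Set L, ∪)`.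
-/

/-- An element `s` of a join-semilattice is singular if the set of elements strictly
above `s` has a least element (a unique successor). -/
def Singular {L : Type*} [SemilatticeSup L] (s : L) : Prop :=
  ∃ t : L, IsLeast { x : L | s < x } t

/-- `N z`: the set of singular elements `s` with `¬ z ≤ s`. -/
def N {L : Type*} [SemilatticeSup L] (z : L) : Set L :=
  { s | Singular s ∧ ¬ z ≤ s }

section

variable {L : Type*} [SemilatticeSup L]

lemma isLeast_sup_of_maximal_not_le {y s : L} (hs : Maximal (fun z ↦ ¬ y ≤ z) s) :
    IsLeast { z | s < z } (s ⊔ y) := by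
  refine ⟨left_lt_sup.2 hs.prop, fun z hz ↦ sup_le hz.le ?_⟩
  by_contra hyz
  exact hz.not_ge (hs.le_of_ge hyz hz.le)

lemma exists_singular_ge_not_le [WellFoundedGT L] {x y : L} (h : ¬ y ≤ x) :
    ∃ s, Singular s ∧ x ≤ s ∧ ¬ y ≤ s := by
  obtain ⟨s, hxs, hs⟩ := exists_maximal_ge_of_wellFoundedGT (fun z ↦ ¬ y ≤ z) x h
  exact ⟨s, ⟨s ⊔ y, isLeast_sup_of_maximal_not_le hs⟩, hxs, hs.prop⟩

lemma N_sup (x y : L) : N (x ⊔ y) = N x ∪ N y := by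
  ext s
  simp only [N, Set.mem_union, Set.mem_ofPred_eq, sup_le_iff, not_and_or, and_or_left]

lemma N_mono : Monotone (N : L → Set L) :=
  fun _ _ hxy _ hs ↦ ⟨hs.1, fun hys ↦ hs.2 (hxy.trans hys)⟩

lemma N_subset_N_iff [WellFoundedGT L] {x y : L} : N x ⊆ N y ↔ x ≤ y := by
  refine ⟨fun hxy ↦ ?_, fun h ↦ N_mono h⟩
  by_contra h
  obtain ⟨s, hs, hys, hxs⟩ := exists_singular_ge_not_le h
  exact (hxy ⟨hs, hxs⟩).2 hys

lemma N_injective [WellFoundedGT L] : Function.Injective (N : L → Set L) :=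
  fun _ _ h ↦ le_antisymm (N_subset_N_iff.1 h.le) (N_subset_N_iff.1 h.ge)

end

/-- In a finite join-semilattice, the map `x ↦ N x` is injective; together with
`N (x ⊔ y) = N x ∪ N y`, this makes `L` isomorphic as a semilattice to the family
`{N x : x ∈ L}` under union. -/
theorem stmt13 {L : Type*} [SemilatticeSup L] [Fintype L] :
    Function.Injective (N : L → Set L) ∧
    (∀ x y : L, N (x ⊔ y) = N x ∪ N y) ∧
    ∃ φ : L → Set L, Function.Injective φ ∧
      Set.range φ = { A : Set L | ∃ x : L, A = N x } ∧
      ∀ x y : L, φ (x ⊔ y) = φ x ∪ φ y := by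
  refine ⟨N_injective, N_sup, N, N_injective, ?_, N_sup⟩
  ext A
  exact exists_congr fun x ↦ eq_comm
end

section
/- Let (L, ⊔) be a finite join-semilattice with a least element ⊥. Then the following are equivalent: (1) every join-irreducible element of L is join-prime, where p is join-irreducible if p ≠ ⊥ and p = a ⊔ b implies p = a or p = b, and p is join-prime if p ≠ ⊥ and p ≤ a ⊔ b implies p ≤ a or p ≤ b; (2) there exist a finite partially ordered set P and a bijection φ from L to the family of all lower sets of P such that φ(x ⊔ y) = φ(x) ∪ φ(y) for all x, y ∈ L (i.e., L is representable as the union semilattice of a quasi-ordinal space). -/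
/-- A finite join-semilattice with a least element can be represented as the union
semilattice of the family of all lower sets of a finite partial order (a quasi-ordinal
space) if and only if every join-irreducible element is join-prime. -/
theorem stmt14 {L : Type*} [SemilatticeSup L] [OrderBot L] [Fintype L] :
    (∀ p : L, p ≠ ⊥ → (∀ a b : L, p = a ⊔ b → p = a ∨ p = b) →
      (∀ a b : L, p ≤ a ⊔ b → p ≤ a ∨ p ≤ b)) ↔
    ∃ (P : Type) (_ : Fintype P) (r : P → P → Prop) (_ : IsPartialOrder P r)
      (φ : L → Set P),
      Function.Injective φ ∧
      Set.range φ = { D : Set P | ∀ a b : P, r a b → b ∈ D → a ∈ D } ∧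
      ∀ x y : L, φ (x ⊔ y) = φ x ∪ φ y := by
  classical
  constructor
  · intro H
    -- every SupIrred is SupPrime
    have Hp : ∀ p : L, SupIrred p → SupPrime p := by
      intro p hp
      refine ⟨hp.1, fun a b hab => ?_⟩
      exact H p hp.ne_bot (fun a b h => (hp.2 h.symm).imp Eq.symm Eq.symm) a b hab
    set n := Fintype.card {p : L // SupIrred p} with hn
    obtain ⟨e⟩ : Nonempty (Fin n ≃ {p : L // SupIrred p}) :=
      ⟨(Fintype.equivFin _).symm⟩
    refine ⟨Fin n, inferInstance, fun i j => ((e i : L) ≤ (e j : L)), ?_,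
      fun x => {i | (e i : L) ≤ x}, ?_, ?_, ?_⟩
    · letI : IsRefl (Fin n) (fun i j => ((e i : L) ≤ (e j : L))) := ⟨fun i => le_refl _⟩
      letI : IsTrans (Fin n) (fun i j => ((e i : L) ≤ (e j : L))) := ⟨fun a b c => le_trans⟩
      letI : IsPreorder (Fin n) (fun i j => ((e i : L) ≤ (e j : L))) := ⟨⟩
      letI : IsAntisymm (Fin n) (fun i j => ((e i : L) ≤ (e j : L))) :=
        ⟨fun a b h h' => e.injective (Subtype.ext (le_antisymm h h'))⟩
      exact ⟨⟩
    · -- injective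
      have key : ∀ x y : L, {i | (e i : L) ≤ x} ⊆ {i | (e i : L) ≤ y} → x ≤ y := by
        intro x y hxy
        obtain ⟨s, rfl, hs⟩ := exists_supIrred_decomposition x
        refine Finset.sup_le fun b hb => ?_
        have : e (e.symm ⟨b, hs hb⟩) = ⟨b, hs hb⟩ := e.apply_symm_apply _
        have hbx : (e (e.symm ⟨b, hs hb⟩) : L) ≤ s.sup id := by
          rw [this]; exact Finset.le_sup (f := id) hb
        simpa [this] using hxy hbx
      intro x y h
      exact le_antisymm (key x y h.le) (key y x h.ge)
    · -- range is lower sets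
      ext D
      simp only [Set.mem_range, Set.mem_setOf_eq]
      constructor
      · rintro ⟨x, rfl⟩ a b hab hb
        exact le_trans hab hb
      · intro hD
        refine ⟨(D.toFinset).sup (fun i => (e i : L)), ?_⟩
        ext i
        simp only [Set.mem_setOf_eq]
        constructor
        · intro hi
          obtain ⟨j, hj, hij⟩ := (Hp _ (e i).2).le_finset_sup.1 hi
          exact hD i j hij (Set.mem_toFinset.1 hj)
        · intro hi
          exact Finset.le_sup (f := fun i => (e i : L)) (Set.mem_toFinset.2 hi)
    · -- sup to union
      intro x y
      ext i
      simp only [Set.mem_setOf_eq, Set.mem_union]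
      exact ⟨fun h => (Hp _ (e i).2).2 h,
        fun h => h.elim le_sup_of_le_left le_sup_of_le_right⟩
  · rintro ⟨P, _, r, hpo, φ, hinj, hrange, hsup⟩
    intro p _ hirr a b hab
    have hle : ∀ x y : L, x ≤ y ↔ φ x ⊆ φ y := by
      intro x y
      constructor
      · intro h
        have : φ (x ⊔ y) = φ x ∪ φ y := hsup x y
        rw [sup_eq_right.2 h] at this
        rw [this]; exact Set.subset_union_left
      · intro h
        have : φ (x ⊔ y) = φ y := by
          rw [hsup x y, Set.union_eq_right.2 h]
        exact sup_eq_right.1 (hinj this)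
    -- lower sets are closed under intersection
    have hlower : ∀ x : L, ∀ i j : P, r i j → j ∈ φ x → i ∈ φ x := by
      intro x
      have : φ x ∈ Set.range φ := ⟨x, rfl⟩
      rw [hrange] at this
      exact this
    have hinter : ∀ x y : L, ∃ c : L, φ c = φ x ∩ φ y := by
      intro x y
      have : (φ x ∩ φ y) ∈ { D : Set P | ∀ a b : P, r a b → b ∈ D → a ∈ D } := by
        intro i j hij hj
        exact ⟨hlower x i j hij hj.1, hlower y i j hij hj.2⟩
      rw [← hrange] at this
      exact this
    obtain ⟨c, hc⟩ := hinter p a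
    obtain ⟨d, hd⟩ := hinter p b
    have hpab : φ p ⊆ φ a ∪ φ b := by
      rw [← hsup]; exact (hle p (a ⊔ b)).1 hab
    have hcd : φ (c ⊔ d) = φ p := by
      rw [hsup, hc, hd, ← Set.inter_union_distrib_left]
      exact Set.inter_eq_left.2 hpab
    have : p = c ⊔ d := (hinj hcd).symm
    rcases hirr c d this with h | h
    · left
      exact (hle p a).2 (by rw [h, hc]; exact Set.inter_subset_right)
    · right
      exact (hle p b).2 (by rw [h, hd]; exact Set.inter_subset_right)
end

section
/- Let (L, ⊔) be a finite join-semilattice with separated equalizers, and suppose a, b, c, d ∈ L satisfy a ≤ b, a ≤ c, c ≤ d, and b ⊔ c = b ⊔ d. Then there exists x ∈ L with a ≤ x ≤ b such that either x ⊔ c = d, or x ⊔ c and d are incomparable (neither x ⊔ c ≤ d nor d ≤ x ⊔ c). -/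
/-!
Take `x` maximal among the elements of `[a, b]` with `x ⊔ c ≤ d`. If `x ⊔ c ≠ d`, then `x < b`,
since `b ⊔ c = b ⊔ d ≥ d`. For a cover `x ⋖ z ≤ b`, maximality gives `z ⊔ c ≰ d`; if moreover
`d ≤ z ⊔ c`, then `z ⊔ c = z ⊔ d` and `x ⋖ z` would be an equalizing pair for `c, d` with no
element strictly between. So `z ⊔ c` and `d` are incomparable.
-/

/-- A join-semilattice has separated equalizers if, for every equalizing pair `x ≤ y`
(a pair for which there exist `a, b` with `x ⊔ a ≠ x ⊔ b`, `y ⊔ a = y ⊔ b`,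
`x ⊔ a ≠ y ⊔ a`, and `x ⊔ b ≠ y ⊔ b`), there exists `z` with `x < z < y`. -/
def SeparatedEqualizers (L : Type*) [SemilatticeSup L] : Prop :=
  ∀ x y : L, x ≤ y →
    (∃ a b : L, x ⊔ a ≠ x ⊔ b ∧ y ⊔ a = y ⊔ b ∧ x ⊔ a ≠ y ⊔ a ∧ x ⊔ b ≠ y ⊔ b) →
    ∃ z : L, x < z ∧ z < y

theorem SeparatedEqualizers.sup_eq_sup_of_covBy {L : Type*} [SemilatticeSup L]
    (hsep : SeparatedEqualizers L) {x y : L} (hxy : x ⋖ y) {a b : L} (hy : y ⊔ a = y ⊔ b)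
    (ha : x ⊔ a ≠ y ⊔ a) (hb : x ⊔ b ≠ y ⊔ b) : x ⊔ a = x ⊔ b := by
  by_contra hab
  obtain ⟨z, hxz, hzy⟩ := hsep x y hxy.le ⟨a, b, hab, hy, ha, hb⟩
  exact hxy.2 hxz hzy

/-- In a finite join-semilattice with separated equalizers, if `a ≤ b`, `a ≤ c ≤ d`,
and `b ⊔ c = b ⊔ d`, then there exists `x` with `a ≤ x ≤ b` such that either
`x ⊔ c = d` or `x ⊔ c` and `d` are incomparable. -/
theorem stmt15 {L : Type*} [SemilatticeSup L] [Fintype L]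
    (hsep : SeparatedEqualizers L) (a b c d : L)
    (hab : a ≤ b) (hac : a ≤ c) (hcd : c ≤ d) (heq : b ⊔ c = b ⊔ d) :
    ∃ x : L, a ≤ x ∧ x ≤ b ∧
      (x ⊔ c = d ∨ (¬ x ⊔ c ≤ d ∧ ¬ d ≤ x ⊔ c)) := by
  obtain ⟨x, hax, hx⟩ := Finite.exists_le_maximal (p := fun y => a ≤ y ∧ y ≤ b ∧ y ⊔ c ≤ d)
    ⟨le_rfl, hab, sup_le (hac.trans hcd) hcd⟩
  obtain ⟨-, hxb, hxcd⟩ := hx.prop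
  by_cases hxc : x ⊔ c = d
  · exact ⟨x, hax, hxb, .inl hxc⟩
  have hxltb : x < b :=
    hxb.lt_of_ne fun h => hxc (hxcd.antisymm (h ▸ heq ▸ le_sup_right))
  obtain ⟨z, hxz, hzb⟩ := exists_covBy_le_of_lt hxltb
  have haz : a ≤ z := hax.trans hxz.le
  have hzcd : ¬ z ⊔ c ≤ d := fun h => hxz.lt.not_ge (hx.2 ⟨haz, hzb, h⟩ hxz.le)
  by_cases hdz : d ≤ z ⊔ c
  · have hzd : z ⊔ c = z ⊔ d := (sup_le_sup_left hcd z).antisymm (sup_le le_sup_left hdz)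
    have hxd : x ⊔ d = d := sup_eq_right.2 (le_sup_left.trans hxcd)
    refine absurd (hxd ▸ hsep.sup_eq_sup_of_covBy hxz hzd ?_ ?_) hxc
    · exact fun h => hxc (hxcd.antisymm (h ▸ hdz))
    · rw [hxd, ← hzd]
      exact fun h => hzcd h.ge
  · exact ⟨z, haz, hzb, .inr ⟨hzcd, hdz⟩⟩
end

section
/- Let (L, ⊔) be a finite join-semilattice with separated equalizers. Suppose p, q ∈ L satisfy q < p and every element x < p satisfies x ≤ q (q is the predecessor of the join-irreducible p); suppose s, t ∈ L satisfy s < t and every element x > s satisfies x ≥ t (t is the successor of the singular element s); and suppose q ≤ s and ¬(p ≤ s). Then t = p ⊔ s. -/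
/-- In a finite join-semilattice with separated equalizers: if `p` is irreducible with
predecessor `q` (i.e. `q < p` and every `x < p` satisfies `x ≤ q`), `s` is singular
with successor `t` (i.e. `s < t` and every `x > s` satisfies `t ≤ x`), `q ≤ s`, and
`¬ p ≤ s`, then `t = p ⊔ s`. -/
theorem stmt16 {L : Type*} [SemilatticeSup L] [Fintype L]
    (hsep : SeparatedEqualizers L) (p q s t : L)
    (hqp : q < p) (hpred : ∀ x : L, x < p → x ≤ q)
    (hst : s < t) (hsucc : ∀ x : L, s < x → t ≤ x)
    (hqs : q ≤ s) (hps : ¬ p ≤ s) :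
    t = p ⊔ s := by
  have hsps : s < p ⊔ s := lt_of_le_of_ne le_sup_right (fun h => hps (h ▸ le_sup_left))
  have htps : t ≤ p ⊔ s := hsucc _ hsps
  have hpt : p ≤ t := by
    by_contra hpt
    have hqsx : q ⊔ s = s := sup_eq_right.mpr hqs
    have hqtx : q ⊔ t = t := sup_eq_right.mpr (hqs.trans hst.le)
    have hpst : p ⊔ s = p ⊔ t :=
      le_antisymm (sup_le le_sup_left (hst.le.trans le_sup_right))
        (sup_le le_sup_left (htps.trans (sup_le le_sup_left le_sup_right)))
    obtain ⟨z, hqz, hzp⟩ := hsep q p hqp.le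
      ⟨s, t, by rw [hqsx, hqtx]; exact hst.ne,
        hpst, by rw [hqsx]; exact fun h => hps (h ▸ le_sup_left),
        by rw [hqtx]; exact fun h => hpt (h ▸ le_sup_left)⟩
    exact absurd (hpred z hzp) (not_le_of_gt hqz)
  exact le_antisymm htps (sup_le hpt hst.le)
end

section
/- Let (L, ⊔) be a finite join-semilattice with a least element. Then L has separated equalizers if and only if L can be represented as an antimatroid, i.e., there exist a finite set X, a learning space 𝓕 on X, and a bijection φ : L → 𝓕 such that φ(x ⊔ y) = φ(x) ∪ φ(y) for all x, y ∈ L. -/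
/-- A learning space (antimatroid) on the finite type `X`: a family of subsets of `X`
containing `∅`, covering all of `X`, accessible, and closed under unions. -/
def IsLearningSpaceOn (X : Type*) (F : Set (Set X)) : Prop :=
  ∅ ∈ F ∧
  ⋃₀ F = Set.univ ∧
  (∀ S ∈ F, S.Nonempty → ∃ x ∈ S, S \ {x} ∈ F) ∧
  (∀ S ∈ F, ∀ T ∈ F, S ∪ T ∈ F)

/-!
Represent `x` by the set `φ x` of meet-irreducibles not above `x`; in a finite lattice `φ` is an
injective join-morphism, and its image is accessible as soon as, for each cover `v ⋖ u`, a single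
meet-irreducible lies above `v` but not above `u`. Separated equalizers give this: applied to a
cover they make `a ↦ u ⊔ a` injective on `{a | v ≤ a, u ≰ a}`, and (by a minimal counterexample)
they make this set closed under joins, so that its maximum is the meet-irreducible and, by
injectivity, the only one. Conversely, in a learning space the sets of an equalizing pair `S ⊆ T`
differ in at least two points, and augmenting `S` by one point of `T` gives a feasible set
strictly between them.
-/

theorem Set.nontrivial_sdiff_of_union_eq {α : Type*} {S T A B : Set α} (hST : S ⊆ T)
    (hAB : S ∪ A ≠ S ∪ B) (hT : T ∪ A = T ∪ B) (hA : S ∪ A ≠ T ∪ A) (hB : S ∪ B ≠ T ∪ B) :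
    (T \ S).Nontrivial := by
  rw [← Set.not_subsingleton_iff]
  intro hsub
  have key : ∀ C, S ∪ C ≠ T ∪ C → S ∪ C = (T ∪ C) \ (T \ S) := by
    intro C hC
    have hSC := Set.union_subset_union_left C hST
    obtain ⟨x, hxT, hxS⟩ := (Set.ssubset_iff_of_subset hSC).1 (hSC.ssubset_of_ne hC)
    have hx : x ∈ T \ S := by grind
    have hdisj : ∀ y ∈ T \ S, y ∉ C := fun y hy => hsub hx hy ▸ fun h => hxS (Or.inr h)
    ext y
    grind
  exact hAB (by rw [key A hA, key B hB, hT])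

theorem exists_insert_mem_of_not_subset {X : Type*} [Finite X] {F : Set (Set X)}
    (hacc : ∀ S ∈ F, S.Nonempty → ∃ x ∈ S, S \ {x} ∈ F)
    (hunion : ∀ S ∈ F, ∀ T ∈ F, S ∪ T ∈ F) {S T : Set X} (hS : S ∈ F) (hT : T ∈ F)
    (hTS : ¬ T ⊆ S) : ∃ t ∈ T, t ∉ S ∧ insert t S ∈ F := by
  induction T using WellFoundedLT.induction with
  | _ T ih =>
  obtain ⟨x, hx, hxF⟩ := hacc T hT ((Set.nonempty_of_not_subset hTS).mono Set.sdiff_subset)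
  by_cases hsub : T \ {x} ⊆ S
  · have hxS : x ∉ S := fun h => hTS (by simpa [Set.insert_eq_of_mem h] using hsub)
    refine ⟨x, hx, hxS, ?_⟩
    have hST : S ∪ T = insert x S := by
      rw [← Set.insert_eq_of_mem hx, ← Set.insert_sdiff_singleton, Set.union_insert,
        Set.union_eq_left.2 hsub]
    exact hST ▸ hunion S hS T hT
  · obtain ⟨t, ht, htS, hins⟩ := ih _ (Set.sdiff_singleton_ssubset.2 hx) hxF hsub
    exact ⟨t, ht.1, htS, hins⟩

theorem exists_mem_ssubset_ssubset {X : Type*} [Finite X] {F : Set (Set X)}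
    (hacc : ∀ S ∈ F, S.Nonempty → ∃ x ∈ S, S \ {x} ∈ F)
    (hunion : ∀ S ∈ F, ∀ T ∈ F, S ∪ T ∈ F) {S T : Set X} (hS : S ∈ F) (hT : T ∈ F)
    (hST : S ⊆ T) (hTS : (T \ S).Nontrivial) : ∃ U ∈ F, S ⊂ U ∧ U ⊂ T := by
  obtain ⟨t, htT, htS, hmem⟩ :=
    exists_insert_mem_of_not_subset hacc hunion hS hT (Set.sdiff_nonempty.1 hTS.nonempty)
  obtain ⟨w, ⟨hwT, hwS⟩, hwt⟩ := hTS.exists_ne t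
  refine ⟨insert t S, hmem, Set.ssubset_insert htS, ?_⟩
  exact (Set.ssubset_iff_of_subset (Set.insert_subset htT hST)).2 ⟨w, hwT, by simp [hwt, hwS]⟩

theorem separatedEqualizers_of_isLearningSpaceOn {L : Type*} [SemilatticeSup L] {X : Type*}
    [Finite X] {F : Set (Set X)} {φ : L → Set X} (hF : IsLearningSpaceOn X F)
    (hinj : Function.Injective φ) (hrange : Set.range φ = F)
    (hsup : ∀ x y, φ (x ⊔ y) = φ x ∪ φ y) : SeparatedEqualizers L := by
  let f : L ↪o Set X := OrderEmbedding.ofMapLEIff φ fun x y => by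
    rw [← Set.union_eq_right, ← hsup, hinj.eq_iff, sup_eq_right]
  have hmem : ∀ x, φ x ∈ F := fun x => hrange ▸ Set.mem_range_self x
  rintro x y hxy ⟨a, b, hab, hy, hxa, hxb⟩
  simp only [← hinj.ne_iff, hsup] at hab hxa hxb
  obtain ⟨_, ⟨z, rfl⟩, hxz, hzy⟩ := hrange ▸ exists_mem_ssubset_ssubset hF.2.2.1 hF.2.2.2
    (hmem x) (hmem y) (f.monotone hxy)
    (Set.nontrivial_sdiff_of_union_eq (f.monotone hxy) hab (by rw [← hsup, ← hsup, hy]) hxa hxb)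
  exact ⟨z, f.lt_iff_lt.1 hxz, f.lt_iff_lt.1 hzy⟩

namespace SeparatedEqualizers

section SemilatticeSup

variable {L : Type*} [SemilatticeSup L] (hSE : SeparatedEqualizers L)
include hSE

theorem sup_eq_or_sup_eq_of_covBy {x y a b : L} (hxy : x ⋖ y) (hab : x ⊔ a ≠ x ⊔ b)
    (h : y ⊔ a = y ⊔ b) : x ⊔ a = y ⊔ a ∨ x ⊔ b = y ⊔ b := by
  by_contra! hne
  obtain ⟨z, hxz, hzy⟩ := hSE x y hxy.le ⟨a, b, hab, h, hne.1, hne.2⟩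
  exact hxy.2 hxz hzy

theorem eq_of_sup_eq {v u a b : L} (hvu : v ⋖ u) (hva : v ≤ a) (hua : ¬ u ≤ a)
    (hvb : v ≤ b) (hub : ¬ u ≤ b) (h : u ⊔ a = u ⊔ b) : a = b := by
  by_contra hab
  rw [← sup_eq_right.2 hva, ← sup_eq_right.2 hvb] at hab
  rcases hSE.sup_eq_or_sup_eq_of_covBy hvu hab h with h' | h'
  · exact hua (by rw [sup_eq_right.2 hva] at h'; exact h' ▸ le_sup_left)
  · exact hub (by rw [sup_eq_right.2 hvb] at h'; exact h' ▸ le_sup_left)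

theorem sup_eq_sup_of_covBy_s19 {a₀ a p u : L} (ha : a₀ ⋖ a) (hp : a₀ ≤ p) (hup : ¬ u ≤ p)
    (hu : u ≤ a ⊔ p) : p ⊔ u = a ⊔ p := by
  have hne : a₀ ⊔ p ≠ a₀ ⊔ (p ⊔ u) := by
    rw [sup_eq_right.2 hp, sup_eq_right.2 (hp.trans le_sup_left)]
    exact fun h => hup (h ▸ le_sup_right)
  have heq : a ⊔ p = a ⊔ (p ⊔ u) := by rw [← sup_assoc, sup_eq_left.2 hu]
  rcases hSE.sup_eq_or_sup_eq_of_covBy ha hne heq with h | h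
  · rw [sup_eq_right.2 hp] at h
    exact absurd (hu.trans h.ge) hup
  · rwa [sup_eq_right.2 (hp.trans le_sup_left), ← heq] at h

variable [Finite L]

theorem supClosed_Ici_sdiff_Ici {v u : L} (hvu : v ⋖ u) : SupClosed (Set.Ici v \ Set.Ici u) := by
  simp only [SupClosed, Set.mem_sdiff, Set.mem_Ici]
  intro a
  induction a using WellFoundedLT.induction with
  | _ a iha =>
  rintro ⟨hva, hua⟩ b
  induction b using WellFoundedLT.induction with
  | _ b ihb =>
  rintro ⟨hvb, hub⟩
  refine ⟨hva.trans le_sup_left, fun hu => ?_⟩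
  have hva' : v < a := hva.lt_of_ne (by rintro rfl; exact hub (by rwa [sup_eq_right.2 hvb] at hu))
  have hvb' : v < b := hvb.lt_of_ne (by rintro rfl; exact hua (by rwa [sup_eq_left.2 hva] at hu))
  obtain ⟨a₀, hva₀, ha₀⟩ := exists_le_covBy_of_lt hva'
  obtain ⟨b₀, hvb₀, hb₀⟩ := exists_le_covBy_of_lt hvb'
  have hua₀b := (iha a₀ ha₀.lt ⟨hva₀, fun h => hua (h.trans ha₀.le)⟩ ⟨hvb, hub⟩).2
  have huab₀ := (ihb b₀ hb₀.lt ⟨hvb₀, fun h => hub (h.trans hb₀.le)⟩).2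
  have ha : a ⊔ (a₀ ⊔ b) = a ⊔ b := by rw [← sup_assoc, sup_eq_left.2 ha₀.le]
  have hb : b ⊔ (a ⊔ b₀) = a ⊔ b := by rw [sup_left_comm, sup_eq_left.2 hb₀.le]
  have h₁ : (a₀ ⊔ b) ⊔ u = a ⊔ b :=
    ha ▸ hSE.sup_eq_sup_of_covBy_s19 ha₀ le_sup_left hua₀b (ha ▸ hu)
  have h₂ : (a ⊔ b₀) ⊔ u = a ⊔ b :=
    hb ▸ hSE.sup_eq_sup_of_covBy_s19 hb₀ le_sup_right huab₀ (hb ▸ hu)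
  have h : a₀ ⊔ b = a ⊔ b₀ := hSE.eq_of_sup_eq hvu (hva₀.trans le_sup_left) hua₀b
    (hva.trans le_sup_left) huab₀ (by rw [sup_comm u, sup_comm u, h₁, h₂])
  exact hua₀b (hu.trans (sup_le (h ▸ le_sup_left) le_sup_right))

end SemilatticeSup

section Lattice

variable {L : Type*} [Lattice L] [Finite L] (hSE : SeparatedEqualizers L)
include hSE

theorem existsUnique_infIrred {v u : L} (hvu : v ⋖ u) :
    ∃! M : L, InfIrred M ∧ v ≤ M ∧ ¬ u ≤ M := by
  set s := Set.Ici v \ Set.Ici u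
  have hvs : v ∈ s := ⟨le_rfl, hvu.lt.not_ge⟩
  obtain ⟨M, ⟨hvM, huM⟩, hmax⟩ : ∃ M ∈ s, ∀ a ∈ s, a ≤ M :=
    ⟨_, (hSE.supClosed_Ici_sdiff_Ici hvu).finsetSup'_mem ⟨v, s.toFinite.mem_toFinset.2 hvs⟩
      fun a ha => s.toFinite.mem_toFinset.1 ha,
      fun a ha => Finset.le_sup' id (s.toFinite.mem_toFinset.2 ha)⟩
  have hu_le : ∀ y, M < y → u ≤ y := fun y hy => by
    by_contra h
    exact hy.not_ge (hmax y ⟨hvM.trans hy.le, h⟩)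
  have hM : InfIrred M := by
    refine ⟨fun h => huM (le_sup_right.trans (h (le_sup_left : M ≤ M ⊔ u))), fun b c hbc => ?_⟩
    by_contra! hne
    have hb := hu_le b ((hbc ▸ inf_le_left).lt_of_ne' hne.1)
    have hc := hu_le c ((hbc ▸ inf_le_right).lt_of_ne' hne.2)
    exact huM (hbc ▸ le_inf hb hc)
  refine ⟨M, ⟨hM, hvM, huM⟩, fun n ⟨hn, hvn, hun⟩ => ?_⟩
  by_contra hne
  have hnM : n < M := (hmax n ⟨hvn, hun⟩).lt_of_ne hne
  -- `M ⊓ (n ⊔ u)` lies strictly above `n` but has the same join with `u`.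
  have hm : M ⊓ (n ⊔ u) ≠ n := fun h =>
    (hn.2 h).elim hnM.ne' fun h' => hun (h' ▸ le_sup_right)
  refine hm (hSE.eq_of_sup_eq hvu (hvn.trans (le_inf hnM.le le_sup_left))
    (fun h => huM (h.trans inf_le_left)) hvn hun (le_antisymm ?_ ?_))
  · exact sup_le le_sup_left (inf_le_right.trans (sup_comm n u).le)
  · exact sup_le_sup_left (le_inf hnM.le le_sup_left) u

end Lattice

end SeparatedEqualizers

def infIrredNotAbove {L : Type*} [SemilatticeInf L] (x : L) : Set {m : L // InfIrred m} :=
  {m | ¬ x ≤ m}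

section infIrredNotAbove

variable {L : Type*} [Lattice L]

theorem infIrredNotAbove_sup (x y : L) :
    infIrredNotAbove (x ⊔ y) = infIrredNotAbove x ∪ infIrredNotAbove y := by
  ext m
  simp only [infIrredNotAbove, Set.mem_ofPred_eq, Set.mem_union, sup_le_iff, not_and_or]

theorem le_of_forall_infIrred [OrderTop L] [WellFoundedGT L] {x y : L}
    (h : ∀ m, InfIrred m → y ≤ m → x ≤ m) : x ≤ y := by
  obtain ⟨s, rfl, hs⟩ := exists_infIrred_decomposition y
  exact Finset.le_inf fun m hm => h m (hs hm) (Finset.inf_le hm)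

theorem infIrredNotAbove_injective [OrderTop L] [WellFoundedGT L] :
    Function.Injective (infIrredNotAbove : L → Set {m : L // InfIrred m}) := by
  intro x y h
  have hiff : ∀ m, InfIrred m → (x ≤ m ↔ y ≤ m) := fun m hm =>
    not_iff_not.1 (Set.ext_iff.1 h ⟨m, hm⟩)
  exact le_antisymm (le_of_forall_infIrred fun m hm => (hiff m hm).2)
    (le_of_forall_infIrred fun m hm => (hiff m hm).1)

theorem SeparatedEqualizers.isLearningSpaceOn_range_infIrredNotAbove [BoundedOrder L] [Finite L]
    (hSE : SeparatedEqualizers L) :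
    IsLearningSpaceOn {m : L // InfIrred m} (Set.range infIrredNotAbove) := by
  refine ⟨⟨⊥, by simp [infIrredNotAbove]⟩, ?_, ?_, ?_⟩
  · exact Set.eq_univ_of_forall fun m =>
      ⟨_, ⟨⊤, rfl⟩, fun h => m.2.ne_top (top_le_iff.1 h)⟩
  · rintro _ ⟨u, rfl⟩ ⟨m₀, hm₀⟩
    have hu : ⊥ < u := bot_le.lt_of_not_ge fun h => hm₀ (h.trans bot_le)
    obtain ⟨v, -, hvu⟩ := exists_le_covBy_of_lt hu
    obtain ⟨M, ⟨hM, hvM, huM⟩, huniq⟩ := hSE.existsUnique_infIrred hvu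
    refine ⟨⟨M, hM⟩, huM, v, ?_⟩
    ext m
    simp only [infIrredNotAbove, Set.mem_sdiff, Set.mem_ofPred_eq, Set.mem_singleton_iff]
    refine ⟨fun hvm => ⟨fun hum => hvm (hvu.le.trans hum), by rintro rfl; exact hvm hvM⟩, ?_⟩
    exact fun ⟨hum, hmM⟩ hvm => hmM (Subtype.ext (huniq m ⟨m.2, hvm, hum⟩))
  · rintro _ ⟨x, rfl⟩ _ ⟨y, rfl⟩
    exact ⟨x ⊔ y, infIrredNotAbove_sup x y⟩

end infIrredNotAbove

theorem IsLearningSpaceOn.image_equiv {X Y : Type*} {F : Set (Set X)} (hF : IsLearningSpaceOn X F)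
    (e : X ≃ Y) : IsLearningSpaceOn Y (Set.image e '' F) := by
  obtain ⟨hempty, hcover, hacc, hunion⟩ := hF
  refine ⟨⟨∅, hempty, Set.image_empty e⟩, ?_, ?_, ?_⟩
  · rw [← Set.image_sUnion, hcover, Set.image_univ_of_surjective e.surjective]
  · rintro _ ⟨S, hS, rfl⟩ hne
    obtain ⟨x, hx, hxS⟩ := hacc S hS (Set.image_nonempty.1 hne)
    exact ⟨e x, Set.mem_image_of_mem e hx, S \ {x}, hxS, by
      rw [Set.image_sdiff e.injective, Set.image_singleton]⟩
  · rintro _ ⟨S, hS, rfl⟩ _ ⟨T, hT, rfl⟩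
    exact ⟨S ∪ T, hunion S hS T hT, Set.image_union e S T⟩

theorem SeparatedEqualizers.exists_learningSpace {L : Type*} [Lattice L] [BoundedOrder L]
    [Finite L] (hSE : SeparatedEqualizers L) :
    ∃ (X : Type) (_ : Fintype X) (F : Set (Set X)) (φ : L → Set X),
      IsLearningSpaceOn X F ∧
      Function.Injective φ ∧
      Set.range φ = F ∧
      ∀ x y : L, φ (x ⊔ y) = φ x ∪ φ y := by
  let e := Finite.equivFin {m : L // InfIrred m}
  refine ⟨Fin (Nat.card {m : L // InfIrred m}), inferInstance, _, fun x => e '' infIrredNotAbove x,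
    hSE.isLearningSpaceOn_range_infIrredNotAbove.image_equiv e, ?_,
    Set.range_comp (Set.image e) _, ?_⟩
  · exact (Set.image_injective.2 e.injective).comp infIrredNotAbove_injective
  · intro x y
    simp only [infIrredNotAbove_sup, Set.image_union]

noncomputable abbrev Finite.toLattice (L : Type*) [SemilatticeSup L] [OrderBot L] [Finite L] :
    Lattice L where
  __ := ‹SemilatticeSup L›
  inf a b := (Set.toFinite {c | c ≤ a ∧ c ≤ b}).toFinset.sup id
  inf_le_left _ _ := Finset.sup_le fun _ hc => ((Set.Finite.mem_toFinset _).1 hc).1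
  inf_le_right _ _ := Finset.sup_le fun _ hc => ((Set.Finite.mem_toFinset _).1 hc).2
  le_inf _ _ _ hca hcb := Finset.le_sup (f := id) ((Set.Finite.mem_toFinset _).2 ⟨hca, hcb⟩)

/-- A finite join-semilattice with a least element has separated equalizers if and only
if it can be represented as an antimatroid: there exist a finite set `X`, a learning
space `𝓕` on `X`, and a bijection `φ : L → 𝓕` with `φ (x ⊔ y) = φ x ∪ φ y`. -/
theorem stmt19 {L : Type*} [SemilatticeSup L] [OrderBot L] [Fintype L] :
    SeparatedEqualizers L ↔
    ∃ (X : Type) (_ : Fintype X) (F : Set (Set X)) (φ : L → Set X),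
      IsLearningSpaceOn X F ∧
      Function.Injective φ ∧
      Set.range φ = F ∧
      ∀ x y : L, φ (x ⊔ y) = φ x ∪ φ y := by
  refine ⟨fun hSE => ?_, fun ⟨X, _, F, φ, hF, hinj, hrange, hsup⟩ =>
    separatedEqualizers_of_isLearningSpaceOn hF hinj hrange hsup⟩
  let _ := Finite.toLattice L
  let _ := Fintype.toBoundedOrder L
  exact hSE.exists_learningSpace
end
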